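/- arXiv:2406.04728 — 11 statements merged into one kernel-verified Lean document; each statement's English description precedes it below -/
import Mathlib

section
/- A set function φ is k-alternating if and only if it is weakly ℓ-alternating for all ℓ with 1 ≤ ℓ ≤ k, where weakly ℓ-alternating means the alternating inequality holds for all pairwise disjoint sets A_0, ..., A_ℓ. -/
/-!
Write `V_φ(A₀; A₁, …, A_k)` as the iterated difference `Δ_{A₁} ⋯ Δ_{A_k} φ (A₀)`, where
`Δ_A f (X) = f X - f (X ∪ A)`. These operators commute, are idempotent, vanish when `A ⊆ X`, and
split as `Δ_{A ∪ B} f (X) = Δ_A f (X) + Δ_B f (X ∪ A)`. Idempotence lets one pad `ℓ` sets to `k`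
by repetition, which gives the forward direction. Conversely, split each `A_i` into the atoms of the
finite partition generated by `A₀, …, A_k`: this expands `V_φ` into iterated differences of atoms
at bases which every atom either contains or misses. A term with an atom inside its base vanishes;
in the others, once repetitions are deleted, the atoms are pairwise disjoint and disjoint from the
base, so weak `ℓ`-alternation applies with `ℓ` the number of distinct atoms.
-/

def IsSetAlgebra {J : Type*} (𝓑 : Set (Set J)) : Prop :=
  ∅ ∈ 𝓑 ∧ (∀ X ∈ 𝓑, Xᶜ ∈ 𝓑) ∧ (∀ X ∈ 𝓑, ∀ Y ∈ 𝓑, X ∪ Y ∈ 𝓑)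

noncomputable def altSum {J : Type*} (φ : Set J → ℝ) (A₀ : Set J) {k : ℕ}
    (A : Fin k → Set J) : ℝ :=
  ∑ K : Finset (Fin k), (-1 : ℝ) ^ K.card * φ (A₀ ∪ ⋃ i ∈ K, A i)

def KAlternating {J : Type*} (𝓑 : Set (Set J)) (φ : Set J → ℝ) (k : ℕ) : Prop :=
  φ ∅ = 0 ∧ ∀ A₀ ∈ 𝓑, ∀ A : Fin k → Set J, (∀ i, A i ∈ 𝓑) → altSum φ A₀ A ≤ 0

def WeaklyKAlternating {J : Type*} (𝓑 : Set (Set J)) (φ : Set J → ℝ) (k : ℕ) : Prop :=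
  φ ∅ = 0 ∧ ∀ A₀ ∈ 𝓑, ∀ A : Fin k → Set J, (∀ i, A i ∈ 𝓑) →
    (∀ i, Disjoint A₀ (A i)) → (∀ i j, i ≠ j → Disjoint (A i) (A j)) →
    altSum φ A₀ A ≤ 0

section IteratedDiff

variable {J : Type*} (φ : Set J → ℝ)

def iteratedDiff : List (Set J) → Set J → ℝ
  | [], X => φ X
  | A :: L, X => iteratedDiff L X - iteratedDiff L (X ∪ A)

@[simp] lemma iteratedDiff_nil (X : Set J) : iteratedDiff φ [] X = φ X := rfl

lemma iteratedDiff_cons (A : Set J) (L : List (Set J)) (X : Set J) :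
    iteratedDiff φ (A :: L) X = iteratedDiff φ L X - iteratedDiff φ L (X ∪ A) := rfl

lemma iteratedDiff_cons_of_subset {A X : Set J} (L : List (Set J)) (h : A ⊆ X) :
    iteratedDiff φ (A :: L) X = 0 := by
  rw [iteratedDiff_cons, Set.union_eq_self_of_subset_right h, sub_self]

lemma iteratedDiff_cons_union (A B : Set J) (L : List (Set J)) (X : Set J) :
    iteratedDiff φ ((A ∪ B) :: L) X =
      iteratedDiff φ (A :: L) X + iteratedDiff φ (B :: L) (X ∪ A) := by
  simp only [iteratedDiff_cons, Set.union_assoc]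
  ring

lemma iteratedDiff_cons_cons_self (A : Set J) (L : List (Set J)) :
    iteratedDiff φ (A :: A :: L) = iteratedDiff φ (A :: L) := by
  funext X
  simp only [iteratedDiff_cons, Set.union_assoc, Set.union_self]
  ring

lemma iteratedDiff_perm {L L' : List (Set J)} (h : L.Perm L') :
    iteratedDiff φ L = iteratedDiff φ L' := by
  induction h with
  | nil => rfl
  | cons A _ ih => funext X; simp only [iteratedDiff_cons, ih]
  | swap A B L =>
    funext X
    simp only [iteratedDiff_cons, Set.union_right_comm X A B]
    ring
  | trans _ _ ih₁ ih₂ => rw [ih₁, ih₂]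

lemma iteratedDiff_dedup [DecidableEq (Set J)] (L : List (Set J)) :
    iteratedDiff φ L.dedup = iteratedDiff φ L := by
  induction L with
  | nil => rfl
  | cons A L ih =>
    by_cases hA : A ∈ L
    · rw [List.dedup_cons_of_mem hA, ih, iteratedDiff_perm φ (List.perm_cons_erase hA),
        ← iteratedDiff_cons_cons_self, ← iteratedDiff_perm φ ((List.perm_cons_erase hA).cons A)]
    · rw [List.dedup_cons_of_notMem hA]
      funext X
      simp only [iteratedDiff_cons, ih]

lemma sum_powerset_eq_iteratedDiff {ι : Type*} [DecidableEq ι] (A : ι → Set J) {l : List ι}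
    (hl : l.Nodup) (X : Set J) :
    ∑ K ∈ l.toFinset.powerset, (-1 : ℝ) ^ K.card * φ (X ∪ ⋃ i ∈ K, A i) =
      iteratedDiff φ (l.map A) X := by
  induction l generalizing X with
  | nil => simp
  | cons a l ih =>
    obtain ⟨ha, hl⟩ := List.nodup_cons.1 hl
    have ha' : a ∉ l.toFinset := List.mem_toFinset.not.2 ha
    rw [List.toFinset_cons, Finset.sum_powerset_insert ha', List.map_cons, iteratedDiff_cons,
      ← ih hl, ← ih hl, sub_eq_add_neg, ← Finset.sum_neg_distrib]
    congr 1
    refine Finset.sum_congr rfl fun K hK => ?_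
    have haK : a ∉ K := fun h => ha' (Finset.mem_powerset.1 hK h)
    rw [Finset.card_insert_of_notMem haK, Finset.set_biUnion_insert, ← Set.union_assoc, pow_succ]
    ring

lemma altSum_eq_iteratedDiff (X : Set J) {k : ℕ} (A : Fin k → Set J) :
    altSum φ X A = iteratedDiff φ (List.ofFn A) X := by
  rw [List.ofFn_eq_map, ← sum_powerset_eq_iteratedDiff φ A (List.nodup_finRange k),
    List.toFinset_finRange, Finset.powerset_univ, altSum]

end IteratedDiff

section Forward

variable {J : Type*} {𝓑 : Set (Set J)} {φ : Set J → ℝ}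

lemma KAlternating.of_succ {n : ℕ} (h : KAlternating 𝓑 φ (n + 2)) : KAlternating 𝓑 φ (n + 1) := by
  refine ⟨h.1, fun X hX A hA => ?_⟩
  have := h.2 X hX (Fin.cons (A 0) A) (Fin.cases (hA 0) hA)
  rwa [altSum_eq_iteratedDiff, List.ofFn_cons, List.ofFn_succ, iteratedDiff_cons_cons_self,
    ← List.ofFn_succ, ← altSum_eq_iteratedDiff] at this

lemma KAlternating.mono {k ℓ : ℕ} (h : KAlternating 𝓑 φ k) (hℓ : 1 ≤ ℓ) (hℓk : ℓ ≤ k) :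
    KAlternating 𝓑 φ ℓ := by
  induction k, hℓk using Nat.le_induction with
  | base => exact h
  | succ n hn ih =>
    obtain ⟨m, rfl⟩ := Nat.exists_eq_add_of_le' (hℓ.trans hn)
    exact ih h.of_succ

lemma KAlternating.weaklyKAlternating {k : ℕ} (h : KAlternating 𝓑 φ k) :
    WeaklyKAlternating 𝓑 φ k :=
  ⟨h.1, fun X hX A hA _ _ => h.2 X hX A hA⟩

end Forward

lemma IsSetAlgebra.toIsSetAlgebra {J : Type*} {𝓑 : Set (Set J)} (h𝓑 : IsSetAlgebra 𝓑) :
    MeasureTheory.IsSetAlgebra 𝓑 :=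
  ⟨h𝓑.1, fun X hX => h𝓑.2.1 X hX, fun X Y hX hY => h𝓑.2.2 X hX Y hY⟩

section Partition

variable {J : Type*} {f : ℕ → Set J}

lemma MeasureTheory.IsSetAlgebra.memPartition_subset {𝓑 : Set (Set J)}
    (h𝓑 : MeasureTheory.IsSetAlgebra 𝓑) (hf : ∀ n, f n ∈ 𝓑) (n : ℕ) : memPartition f n ⊆ 𝓑 := by
  induction n with
  | zero => simpa using h𝓑.univ_mem
  | succ n ih =>
    rintro P ⟨u, hu, rfl | rfl⟩
    exacts [h𝓑.inter_mem (ih hu) (hf n), h𝓑.sdiff_mem (ih hu) (hf n)]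

lemma subset_or_disjoint_of_mem_memPartition {n i : ℕ} {P : Set J} (hP : P ∈ memPartition f n)
    (hi : i < n) : P ⊆ f i ∨ Disjoint (f i) P := by
  induction n generalizing P with
  | zero => exact absurd hi (Nat.not_lt_zero i)
  | succ n ih =>
    obtain ⟨u, hu, rfl | rfl⟩ := hP
    · rcases (Nat.lt_succ_iff_lt_or_eq.1 hi) with hi | rfl
      · exact (ih hu hi).imp (Set.inter_subset_left.trans ·) (·.mono_right Set.inter_subset_left)
      · exact Or.inl Set.inter_subset_right
    · rcases (Nat.lt_succ_iff_lt_or_eq.1 hi) with hi | rfl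
      · exact (ih hu hi).imp (Set.sdiff_subset.trans ·) (·.mono_right Set.sdiff_subset)
      · exact Or.inr Set.disjoint_sdiff_right

lemma sUnion_memPartition_subset {n i : ℕ} (hi : i < n) :
    ⋃₀ {P ∈ memPartition f n | P ⊆ f i} = f i := by
  refine (Set.sUnion_subset fun P hP => hP.2).antisymm fun x hx => ?_
  refine ⟨memPartitionSet f n x, ⟨memPartitionSet_mem f n x, ?_⟩, mem_memPartitionSet f n x⟩
  refine (subset_or_disjoint_of_mem_memPartition (memPartitionSet_mem f n x) hi).resolve_right ?_
  exact Set.not_disjoint_iff.2 ⟨x, hx, mem_memPartitionSet f n x⟩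

end Partition

section Reverse

variable {J : Type*} {𝓑 : Set (Set J)} {φ : Set J → ℝ}

lemma WeaklyKAlternating.iteratedDiff_nonpos {M : List (Set J)}
    (h : WeaklyKAlternating 𝓑 φ M.length) {X : Set J} (hX : X ∈ 𝓑) (hM : ∀ P ∈ M, P ∈ 𝓑)
    (hXM : ∀ P ∈ M, Disjoint X P) (hM_disj : M.Pairwise Disjoint) :
    iteratedDiff φ M X ≤ 0 := by
  have hne : ∀ i j, i ≠ j → Disjoint (M.get i) (M.get j) := by
    intro i j hij
    rcases lt_or_gt_of_ne hij with hij | hij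
    exacts [hM_disj.rel_get_of_lt hij, (hM_disj.rel_get_of_lt hij).symm]
  simpa only [altSum_eq_iteratedDiff, List.ofFn_get] using
    h.2 X hX M.get (fun i => hM _ (M.get_mem i)) (fun i => hXM _ (M.get_mem i)) hne

lemma iteratedDiff_nonpos_of_pairwiseDisjoint {k : ℕ}
    (hweak : ∀ ℓ, 1 ≤ ℓ → ℓ ≤ k → WeaklyKAlternating 𝓑 φ ℓ) {𝒜 : Set (Set J)} (h𝒜𝓑 : 𝒜 ⊆ 𝓑)
    (h𝒜 : 𝒜.PairwiseDisjoint id) {X : Set J} (hX : X ∈ 𝓑)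
    (hX𝒜 : ∀ P ∈ 𝒜, P ⊆ X ∨ Disjoint X P) {M : List (Set J)} (hM : ∀ P ∈ M, P ∈ 𝒜)
    (hM_ne : M ≠ []) (hMk : M.length ≤ k) :
    iteratedDiff φ M X ≤ 0 := by
  classical
  by_cases hsub : ∃ P ∈ M, P ⊆ X
  · obtain ⟨P, hP, hPX⟩ := hsub
    rw [iteratedDiff_perm φ (List.perm_cons_erase hP), iteratedDiff_cons_of_subset φ _ hPX]
  push Not at hsub
  have hXM : ∀ P ∈ M, Disjoint X P := fun P hP => (hX𝒜 P (hM P hP)).resolve_left (hsub P hP)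
  have hlen : M.dedup.length ≤ M.length := M.dedup_sublist.length_le
  have hpos : 1 ≤ M.dedup.length :=
    List.length_pos_iff.2 fun h => hM_ne ((List.dedup_eq_nil M).1 h)
  rw [← iteratedDiff_dedup]
  refine (hweak _ hpos (hlen.trans hMk)).iteratedDiff_nonpos hX
    (fun P hP => h𝒜𝓑 (hM P (List.mem_dedup.1 hP))) (fun P hP => hXM P (List.mem_dedup.1 hP)) ?_
  exact (List.nodup_dedup M).pairwise_of_forall_ne fun P hP Q hQ hPQ =>
    h𝒜 (hM P (List.mem_dedup.1 hP)) (hM Q (List.mem_dedup.1 hQ)) hPQ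

lemma iteratedDiff_map_sUnion_append_nonpos {k : ℕ} (h𝓑 : IsSetAlgebra 𝓑)
    (hweak : ∀ ℓ, 1 ≤ ℓ → ℓ ≤ k → WeaklyKAlternating 𝓑 φ ℓ)
    {𝒜 : Set (Set J)} (h𝒜𝓑 : 𝒜 ⊆ 𝓑) (h𝒜 : 𝒜.PairwiseDisjoint id) (L : List (Finset (Set J)))
    (hL : ∀ s ∈ L, ↑s ⊆ 𝒜) (M : List (Set J)) (hM : ∀ P ∈ M, P ∈ 𝒜) {X : Set J} (hX : X ∈ 𝓑)
    (hX𝒜 : ∀ P ∈ 𝒜, P ⊆ X ∨ Disjoint X P) (hLM : L ≠ [] ∨ M ≠ [])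
    (hLMk : L.length + M.length ≤ k) :
    iteratedDiff φ (L.map (fun s : Finset (Set J) => ⋃₀ (s : Set (Set J))) ++ M) X ≤ 0 := by
  classical
  induction L generalizing M X with
  | nil =>
    exact iteratedDiff_nonpos_of_pairwiseDisjoint hweak h𝒜𝓑 h𝒜 hX hX𝒜 hM (by simpa using hLM)
      (by simpa using hLMk)
  | cons s L ih =>
    have hs := hL s List.mem_cons_self
    have hL' := fun t ht => hL t (List.mem_cons_of_mem s ht)
    clear hLM hL
    induction s using Finset.induction_on generalizing X with
    | empty => exact (iteratedDiff_cons_of_subset φ _ (by simp)).le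
    | insert P s hPs ihs =>
      rw [Finset.coe_insert, Set.insert_subset_iff] at hs
      rw [List.map_cons, List.cons_append, Finset.coe_insert, Set.sUnion_insert,
        iteratedDiff_cons_union]
      refine add_nonpos ?_ ?_
      · rw [iteratedDiff_perm φ List.perm_middle.symm]
        refine ih hL' (P :: M) (List.forall_mem_cons.2 ⟨hs.1, hM⟩) hX hX𝒜
          (Or.inr (List.cons_ne_nil P M)) ?_
        simp only [List.length_cons] at hLMk ⊢
        omega
      · refine ihs (h𝓑.2.2 X hX P (h𝒜𝓑 hs.1)) (fun Q hQ => ?_) hLMk hs.2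
        obtain rfl | hPQ := eq_or_ne P Q
        · exact Or.inl Set.subset_union_right
        · exact (hX𝒜 Q hQ).imp (·.trans Set.subset_union_left)
            (Disjoint.union_left · (h𝒜 hs.1 hQ hPQ))

lemma iteratedDiff_nonpos_of_weaklyKAlternating {k : ℕ} (h𝓑 : IsSetAlgebra 𝓑)
    (hweak : ∀ ℓ, 1 ≤ ℓ → ℓ ≤ k → WeaklyKAlternating 𝓑 φ ℓ) {L : List (Set J)}
    (hL𝓑 : ∀ A ∈ L, A ∈ 𝓑) (hL : L ≠ []) (hLk : L.length ≤ k) {X : Set J} (hX : X ∈ 𝓑) :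
    iteratedDiff φ L X ≤ 0 := by
  classical
  let f : ℕ → Set J := fun n => (X :: L).getD n ∅
  have hf : ∀ n, f n ∈ 𝓑 := by
    intro n
    simp only [f, List.getD_eq_getElem?_getD]
    cases h : (X :: L)[n]? with
    | none => exact h𝓑.1
    | some A => exact List.forall_mem_cons.2 ⟨hX, hL𝓑⟩ A (List.mem_of_getElem? h)
  let atoms (A : Set J) : Finset (Set J) :=
    ((finite_memPartition f (L.length + 1)).subset (Set.sep_subset _ (· ⊆ A))).toFinset
  have hL_eq : (L.map atoms).map (fun s : Finset (Set J) => ⋃₀ (s : Set (Set J))) = L := by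
    refine (List.map_map ..).trans (List.map_congr_left fun A hA => ?_) |>.trans L.map_id
    obtain ⟨i, hi, rfl⟩ := List.getElem_of_mem hA
    have hfi : f (i + 1) = L[i] := by simp [f, hi]
    simpa [atoms, hfi] using sUnion_memPartition_subset (f := f) (Nat.succ_lt_succ hi)
  have := iteratedDiff_map_sUnion_append_nonpos h𝓑 hweak
    (h𝓑.toIsSetAlgebra.memPartition_subset hf (L.length + 1))
    (fun P hP Q hQ => disjoint_memPartition f _ hP hQ)
    (L.map atoms) (by simp [atoms]) [] (by simp) hX
    (fun P hP => subset_or_disjoint_of_mem_memPartition hP (Nat.succ_pos _))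
    (by simpa using hL) (by simpa using hLk)
  rwa [List.append_nil, hL_eq] at this

end Reverse

/-- `φ` is `k`-alternating iff it is weakly `ℓ`-alternating for all `1 ≤ ℓ ≤ k`. -/
theorem stmt7 {J : Type*} (𝓑 : Set (Set J)) (h𝓑 : IsSetAlgebra 𝓑)
    (φ : Set J → ℝ) (k : ℕ) (hk : 1 ≤ k) :
    KAlternating 𝓑 φ k ↔
      ∀ ℓ : ℕ, 1 ≤ ℓ → ℓ ≤ k → WeaklyKAlternating 𝓑 φ ℓ := by
  refine ⟨fun h ℓ hℓ hℓk => (h.mono hℓ hℓk).weaklyKAlternating,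
    fun hweak => ⟨(hweak 1 le_rfl hk).1, fun A₀ hA₀ A hA => ?_⟩⟩
  rw [altSum_eq_iteratedDiff]
  exact iteratedDiff_nonpos_of_weaklyKAlternating h𝓑 hweak (by simpa using hA) (by simp; omega)
    (by simp) hA₀
end

section
/- For every positive integer ℓ there exists a set function on a finite set that is ℓ-alternating but not (ℓ+1)-alternating; namely on a finite set J with |J| > ℓ, fixing X ⊆ J with |X| = ℓ+1, the function ψ = Σ_{∅ ≠ A ⊆ J, |A| ≤ ℓ} φ_A − φ_X is ℓ-alternating but not (ℓ+1)-alternating. -/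
/-- `φ` is `k`-alternating (on the full power set of a finite set). -/
def KAlt {J : Type*} (φ : Set J → ℝ) (k : ℕ) : Prop :=
  φ ∅ = 0 ∧ ∀ (A₀ : Set J) (A : Fin k → Set J), altSum φ A₀ A ≤ 0

open Classical in
/-- `φ_A`: the indicator of intersecting `A`. -/
noncomputable def phiA {J : Type*} (A : Set J) (X : Set J) : ℝ :=
  if (X ∩ A).Nonempty then 1 else 0

/-- `ψ = Σ_{∅ ≠ A ⊆ J, |A| ≤ ℓ} φ_A − φ_X`. -/
noncomputable def psi8 {J : Type*} [Fintype J] [DecidableEq J]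
    (ℓ : ℕ) (X : Finset J) (Y : Set J) : ℝ :=
  (∑ A ∈ Finset.univ.powerset.filter
      (fun A : Finset J => A.Nonempty ∧ A.card ≤ ℓ), phiA (↑A : Set J) Y) -
    phiA (↑X : Set J) Y

open Finset

theorem Finset.sum_powerset_neg_one_pow_card_ring {R α : Type*} [Ring R] [DecidableEq α]
    (x : Finset α) : ∑ m ∈ x.powerset, (-1 : R) ^ #m = if x = ∅ then 1 else 0 := by
  have h := congrArg (Int.cast : ℤ → R) (sum_powerset_neg_one_pow_card (x := x))
  push_cast at h
  rw [h]

section AltSum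

variable {J : Type*}

lemma altSum_sub (φ ψ : Set J → ℝ) (A₀ : Set J) {k : ℕ} (A : Fin k → Set J) :
    altSum (φ - ψ) A₀ A = altSum φ A₀ A - altSum ψ A₀ A := by
  simp only [altSum, Pi.sub_apply, mul_sub, sum_sub_distrib]

lemma altSum_sum {ι : Type*} (s : Finset ι) (φ : ι → Set J → ℝ) (A₀ : Set J) {k : ℕ}
    (A : Fin k → Set J) : altSum (∑ a ∈ s, φ a) A₀ A = ∑ a ∈ s, altSum (φ a) A₀ A := by
  simp only [altSum, Finset.sum_apply, mul_sum]
  exact sum_comm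

open scoped Classical

lemma phiA_eq_one_sub (A Y : Set J) : phiA A Y = 1 - if Disjoint Y A then 1 else 0 := by
  unfold phiA
  rw [← Set.not_disjoint_iff_nonempty_inter]
  split_ifs <;> simp_all

lemma altSum_phiA (A A₀ : Set J) {k : ℕ} (hk : k ≠ 0) (B : Fin k → Set J) :
    altSum (phiA A) A₀ B = -if Disjoint A₀ A ∧ ∀ i, ¬Disjoint (B i) A then 1 else 0 := by
  set T := univ.filter fun i => Disjoint (B i) A
  have hdisj (K : Finset (Fin k)) :
      Disjoint (A₀ ∪ ⋃ i ∈ K, B i) A ↔ Disjoint A₀ A ∧ K ∈ T.powerset := by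
    simp [T, Set.disjoint_union_left, subset_iff]
  have hT : T = ∅ ↔ ∀ i, ¬Disjoint (B i) A := by simp [T, filter_eq_empty_iff]
  have huniv : (univ : Finset (Fin k)).Nonempty := ⟨⟨0, Nat.pos_of_ne_zero hk⟩, mem_univ _⟩
  calc altSum (phiA A) A₀ B
      = ∑ K : Finset (Fin k), (-1 : ℝ) ^ #K -
          if Disjoint A₀ A then ∑ K ∈ T.powerset, (-1 : ℝ) ^ #K else 0 := by
        simp only [altSum, phiA_eq_one_sub, mul_sub, mul_one, sum_sub_distrib]
        simp_rw [hdisj, ite_and, mul_ite, mul_one, mul_zero]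
        split_ifs
        · rw [sum_ite_mem, univ_inter]
        · simp
    _ = _ := by
        rw [← powerset_univ, sum_powerset_neg_one_pow_card_ring,
          sum_powerset_neg_one_pow_card_ring, if_neg huniv.ne_empty]
        simp only [← hT, ite_and]
        split_ifs <;> simp

end AltSum

lemma exists_subset_card_le_forall_not_disjoint {J : Type*} [DecidableEq J] {k : ℕ}
    (hk : k ≠ 0) (X : Finset J) (B : Fin k → Set J) (hB : ∀ i, ¬Disjoint (B i) ↑X) :
    ∃ A ⊆ X, A.Nonempty ∧ #A ≤ k ∧ ∀ i, ¬Disjoint (B i) ↑A := by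
  choose x hxB hxX using fun i => Set.not_disjoint_iff.1 (hB i)
  refine ⟨univ.image x, image_subset_iff.2 fun i _ => hxX i,
    ⟨x ⟨0, Nat.pos_of_ne_zero hk⟩, mem_image_of_mem x (mem_univ _)⟩, ?_, fun i => ?_⟩
  · exact card_image_le.trans (card_univ.trans (Fintype.card_fin k)).le
  · exact Set.not_disjoint_iff.2 ⟨x i, hxB i, by simp⟩

section Psi

variable {J : Type*} [Fintype J] [DecidableEq J]

open scoped Classical

lemma psi8_eq (ℓ : ℕ) (X : Finset J) :
    psi8 ℓ X = (∑ A ∈ univ.powerset.filter (fun A : Finset J => A.Nonempty ∧ #A ≤ ℓ),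
      phiA (↑A : Set J)) - phiA ↑X := by
  ext Y
  simp [psi8, Finset.sum_apply]

lemma altSum_psi8 (ℓ : ℕ) (X : Finset J) (A₀ : Set J) {k : ℕ} (hk : k ≠ 0)
    (B : Fin k → Set J) :
    altSum (psi8 ℓ X) A₀ B =
      (if Disjoint A₀ ↑X ∧ ∀ i, ¬Disjoint (B i) ↑X then 1 else 0) -
        ∑ A ∈ univ.powerset.filter (fun A : Finset J => A.Nonempty ∧ #A ≤ ℓ),
          if Disjoint A₀ ↑A ∧ ∀ i, ¬Disjoint (B i) ↑A then 1 else 0 := by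
  simp only [psi8_eq, altSum_sub, altSum_sum, altSum_phiA _ _ hk, sum_neg_distrib]
  ring

lemma kAlt_psi8 {ℓ : ℕ} (hℓ : ℓ ≠ 0) (X : Finset J) : KAlt (psi8 ℓ X) ℓ := by
  refine ⟨by simp [psi8, phiA], fun A₀ B => ?_⟩
  rw [altSum_psi8 ℓ X A₀ hℓ, sub_nonpos]
  split_ifs with hX
  · obtain ⟨A, hAX, hA, hcard, hAB⟩ :=
      exists_subset_card_le_forall_not_disjoint hℓ X B hX.2
    have hAhit : Disjoint A₀ ↑A ∧ ∀ i, ¬Disjoint (B i) ↑A :=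
      ⟨hX.1.mono_right (coe_subset.2 hAX), hAB⟩
    refine le_trans ?_ (single_le_sum (fun _ _ => ?_) (by simp [hA, hcard] : A ∈ _))
    · rw [if_pos hAhit]
    · split_ifs <;> norm_num
  · exact sum_nonneg fun _ _ => by split_ifs <;> norm_num

lemma not_kAlt_psi8_succ {ℓ : ℕ} {X : Finset J} (hX : #X = ℓ + 1) :
    ¬KAlt (psi8 ℓ X) (ℓ + 1) := by
  rintro ⟨-, halt⟩
  have e : Fin (ℓ + 1) ≃ X := (Fintype.equivFinOfCardEq (by simp [hX])).symm
  have hmem {A : Finset J} : (∀ i, ¬Disjoint ({(e i : J)} : Set J) ↑A) ↔ X ⊆ A := by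
    simp only [Set.disjoint_singleton_left, not_not, mem_coe]
    exact ⟨fun h x hx => by simpa using h (e.symm ⟨x, hx⟩), fun h i => h (e i).2⟩
  have := halt ∅ fun i => {(e i : J)}
  rw [altSum_psi8 ℓ X ∅ ℓ.succ_ne_zero] at this
  simp only [Set.empty_disjoint, true_and, hmem, subset_refl, if_true] at this
  rw [sum_eq_zero fun A hA => if_neg fun hXA => ?_] at this
  · norm_num at this
  · have := card_le_card hXA
    simp only [powerset_univ, mem_filter, mem_univ, true_and] at hA
    omega

end Psi

theorem stmt8_general {J : Type*} [Fintype J] [DecidableEq J] (ℓ : ℕ) (hℓ : 1 ≤ ℓ)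
    (X : Finset J) (hX : X.card = ℓ + 1) :
    KAlt (psi8 ℓ X) ℓ ∧ ¬ KAlt (psi8 ℓ X) (ℓ + 1) :=
  ⟨kAlt_psi8 (Nat.one_le_iff_ne_zero.1 hℓ) X, not_kAlt_psi8_succ hX⟩

/-- On a finite set `J` with `|J| > ℓ` and `X ⊆ J` of size `ℓ + 1`, the function
`ψ = Σ_{∅ ≠ A ⊆ J, |A| ≤ ℓ} φ_A − φ_X` is `ℓ`-alternating but not
`(ℓ+1)`-alternating. -/
theorem stmt8 {J : Type*} [Fintype J] [DecidableEq J] (ℓ : ℕ) (hℓ : 1 ≤ ℓ)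
    (hJ : ℓ < Fintype.card J) (X : Finset J) (hX : X.card = ℓ + 1) :
    KAlt (psi8 ℓ X) ℓ ∧ ¬ KAlt (psi8 ℓ X) (ℓ + 1) :=
  stmt8_general ℓ hℓ X hX
end

section
/- For a graph G with nonnegative edge weights w, the function e_w(X) (total weight of edges incident to X) is infinite-alternating, and the weighted cut function d_w is weakly infinite-alternating; moreover V_{d_w}(A_0; A_1, ..., A_k) = 0 for all k ≥ 3 and pairwise disjoint A_0, ..., A_k. -/
open Classical in
/-- The weighted cut function `d_w`: total weight of edges with exactly one
endpoint in `X`. -/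
noncomputable def cutFun {V : Type*} [Fintype V] (G : SimpleGraph V)
    (w : Sym2 V → ℝ) (X : Set V) : ℝ :=
  ∑ e ∈ G.edgeFinset, if (∃ u ∈ e, u ∈ X) ∧ (∃ u ∈ e, u ∉ X) then w e else 0

open Classical in
/-- `e_w`: total weight of edges incident to `X`. -/
noncomputable def incFun {V : Type*} [Fintype V] (G : SimpleGraph V)
    (w : Sym2 V → ℝ) (X : Set V) : ℝ :=
  ∑ e ∈ G.edgeFinset, if ∃ u ∈ e, u ∈ X then w e else 0

/-!
Both set functions are nonnegative combinations, over the edges, of the indicators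
`D_S X = [S ∩ X = ∅]`. Since `D_S (X ∪ Y) = D_S X * D_S Y`, the alternating sum factors as
`V_{D_S}(A₀; A) = D_S A₀ * ∏ i, (1 - D_S (A i)) ≥ 0`, and it vanishes as soon as the `A i` are
pairwise disjoint and outnumber the points of `S` (pigeonhole). An edge `e = ab` contributes
`w e * (1 - D_e)` to `e_w` and `w e * (D_a + D_b - 2 D_e)` to `d_w`; constants and the
singleton terms are killed for `k ≥ 1`, resp. for `k ≥ 2` disjoint sets, leaving `-V_{D_e}` and
`-2 V_{D_e}`, and the latter vanishes for `k ≥ 3` because `e` has at most two endpoints.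
-/

open Finset Function

section AltSum

variable {J : Type*} {k : ℕ}

noncomputable def altSumₗ (A₀ : Set J) (A : Fin k → Set J) : (Set J → ℝ) →ₗ[ℝ] ℝ where
  toFun φ := altSum φ A₀ A
  map_add' φ ψ := by simp only [altSum, Pi.add_apply, mul_add, sum_add_distrib]
  map_smul' c φ := by
    simp only [altSum, Pi.smul_apply, smul_eq_mul, RingHom.id_apply, mul_sum]
    exact sum_congr rfl fun _ _ => mul_left_comm _ _ _

@[simp]
lemma altSumₗ_apply (A₀ : Set J) (A : Fin k → Set J) (φ : Set J → ℝ) :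
    altSumₗ A₀ A φ = altSum φ A₀ A := rfl

lemma altSum_eq_mul_prod_of_map_union (φ : Set J → ℝ) (hφ : ∀ X Y, φ (X ∪ Y) = φ X * φ Y)
    (A₀ : Set J) (A : Fin k → Set J) :
    altSum φ A₀ A = φ A₀ * ∏ i, (1 - φ (A i)) := by
  classical
  have hK : ∀ K : Finset (Fin k), φ (A₀ ∪ ⋃ i ∈ K, A i) = φ A₀ * ∏ i ∈ K, φ (A i) := by
    intro K
    induction K using Finset.induction_on with
    | empty => simp
    | insert j K hj ih =>
      rw [set_biUnion_insert, Set.union_left_comm, hφ, prod_insert hj, ← mul_left_comm, ← ih,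
        hφ]
  simp_rw [altSum, hK, sub_eq_add_neg, prod_one_add, powerset_univ, mul_sum, prod_neg]
  exact sum_congr rfl fun _ _ => by ring

lemma altSum_one (hk : k ≠ 0) (A₀ : Set J) (A : Fin k → Set J) : altSum 1 A₀ A = 0 := by
  rw [altSum_eq_mul_prod_of_map_union 1 fun _ _ => (mul_one 1).symm]
  exact mul_eq_zero_of_right _ <| prod_eq_zero (mem_univ ⟨0, Nat.pos_of_ne_zero hk⟩) (sub_self 1)

end AltSum

section DisjointIndicator

variable {J : Type*} {k : ℕ}

open Classical in
noncomputable def disjointIndicator (S X : Set J) : ℝ := if Disjoint S X then 1 else 0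

lemma disjointIndicator_union (S X Y : Set J) :
    disjointIndicator S (X ∪ Y) = disjointIndicator S X * disjointIndicator S Y := by
  unfold disjointIndicator
  by_cases hX : Disjoint S X <;> by_cases hY : Disjoint S Y <;>
    simp [Set.disjoint_union_right, hX, hY]

lemma disjointIndicator_nonneg (S X : Set J) : 0 ≤ disjointIndicator S X := by
  unfold disjointIndicator; split_ifs <;> norm_num

lemma disjointIndicator_le_one (S X : Set J) : disjointIndicator S X ≤ 1 := by
  unfold disjointIndicator; split_ifs <;> norm_num

lemma altSum_disjointIndicator (S A₀ : Set J) (A : Fin k → Set J) :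
    altSum (disjointIndicator S) A₀ A
      = disjointIndicator S A₀ * ∏ i, (1 - disjointIndicator S (A i)) :=
  altSum_eq_mul_prod_of_map_union _ (disjointIndicator_union S) A₀ A

lemma altSum_disjointIndicator_nonneg (S A₀ : Set J) (A : Fin k → Set J) :
    0 ≤ altSum (disjointIndicator S) A₀ A := by
  rw [altSum_disjointIndicator]
  exact mul_nonneg (disjointIndicator_nonneg S A₀) <|
    prod_nonneg fun i _ => sub_nonneg.mpr (disjointIndicator_le_one S (A i))

lemma exists_disjoint_of_ncard_lt {S : Set J} (hS : S.Finite) (hk : S.ncard < k)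
    {A : Fin k → Set J} (hA : Pairwise (Disjoint on A)) : ∃ i, Disjoint S (A i) := by
  by_contra! h
  choose f hfS hfA using fun i => Set.not_disjoint_iff.mp (h i)
  have hf : Set.InjOn f Set.univ := fun i _ j _ hij =>
    by_contra fun hne => Set.disjoint_left.mp (hA hne) (hfA i) (hij ▸ hfA j)
  have := Set.ncard_le_ncard_of_injOn f (fun i _ => hfS i) hf hS
  rw [Set.ncard_univ, Nat.card_eq_fintype_card, Fintype.card_fin] at this
  omega

lemma altSum_disjointIndicator_eq_zero {S : Set J} (hS : S.Finite) (hk : S.ncard < k)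
    (A₀ : Set J) {A : Fin k → Set J} (hA : Pairwise (Disjoint on A)) :
    altSum (disjointIndicator S) A₀ A = 0 := by
  obtain ⟨i, hi⟩ := exists_disjoint_of_ncard_lt hS hk hA
  rw [altSum_disjointIndicator]
  refine mul_eq_zero_of_right _ <| prod_eq_zero (mem_univ i) ?_
  simp [disjointIndicator, hi]

end DisjointIndicator

section Edge

variable {V : Type*} {k : ℕ}

lemma Sym2.ncard_coe_le_two (e : Sym2 V) : (e : Set V).ncard ≤ 2 := by
  induction e using Sym2.ind with
  | _ a b => simpa [Sym2.coe_mk] using Set.ncard_insert_le a {b}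

open Classical in
noncomputable def cutIndicator (e : Sym2 V) (X : Set V) : ℝ :=
  if (∃ u ∈ e, u ∈ X) ∧ (∃ u ∈ e, u ∉ X) then 1 else 0

lemma cutIndicator_mk (a b : V) :
    cutIndicator s(a, b) = disjointIndicator {a} + disjointIndicator {b}
      - (2 : ℝ) • disjointIndicator {a, b} := by
  ext X
  by_cases ha : a ∈ X <;> by_cases hb : b ∈ X <;>
    simp [cutIndicator, disjointIndicator, Set.disjoint_insert_left, ha, hb]; norm_num

lemma altSum_cutIndicator (hk : 2 ≤ k) (e : Sym2 V) (A₀ : Set V) {A : Fin k → Set V}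
    (hA : Pairwise (Disjoint on A)) :
    altSum (cutIndicator e) A₀ A = -2 * altSum (disjointIndicator e) A₀ A := by
  induction e using Sym2.ind with
  | _ a b =>
    have hpoint (x : V) : altSum (disjointIndicator {x}) A₀ A = 0 :=
      altSum_disjointIndicator_eq_zero (Set.finite_singleton x)
        (by rw [Set.ncard_singleton]; omega) A₀ hA
    rw [← altSumₗ_apply, cutIndicator_mk, map_sub, map_add, map_smul, smul_eq_mul]
    simp only [altSumₗ_apply, hpoint, Sym2.coe_mk]
    ring

end Edge

section Graph

variable {V : Type*} [Fintype V] {k : ℕ}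

open Classical in
lemma incFun_eq_sum (G : SimpleGraph V) (w : Sym2 V → ℝ) :
    incFun G w = ∑ e ∈ G.edgeFinset, w e • (1 - disjointIndicator (e : Set V)) := by
  ext X
  simp only [incFun, Finset.sum_apply, Pi.smul_apply, Pi.sub_apply, Pi.one_apply, smul_eq_mul]
  refine sum_congr rfl fun e _ => ?_
  have hmeets : (∃ u ∈ e, u ∈ X) ↔ ¬Disjoint (e : Set V) X := by
    simp [Set.not_disjoint_iff]
  by_cases h : Disjoint (e : Set V) X <;> simp [disjointIndicator, hmeets, h]

open Classical in
lemma cutFun_eq_sum (G : SimpleGraph V) (w : Sym2 V → ℝ) :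
    cutFun G w = ∑ e ∈ G.edgeFinset, w e • cutIndicator e := by
  ext X
  simp only [cutFun, cutIndicator, Finset.sum_apply, Pi.smul_apply, smul_eq_mul, mul_ite, mul_one,
    mul_zero]

open Classical in
lemma altSum_incFun (G : SimpleGraph V) (w : Sym2 V → ℝ) (hk : k ≠ 0) (A₀ : Set V)
    (A : Fin k → Set V) :
    altSum (incFun G w) A₀ A
      = -∑ e ∈ G.edgeFinset, w e * altSum (disjointIndicator e) A₀ A := by
  rw [← altSumₗ_apply, incFun_eq_sum, map_sum, ← sum_neg_distrib]
  refine sum_congr rfl fun e _ => ?_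
  rw [map_smul, map_sub, altSumₗ_apply, altSumₗ_apply, altSum_one hk, smul_eq_mul]
  ring

open Classical in
lemma altSum_cutFun (G : SimpleGraph V) (w : Sym2 V → ℝ) (hk : 2 ≤ k) (A₀ : Set V)
    {A : Fin k → Set V} (hA : Pairwise (Disjoint on A)) :
    altSum (cutFun G w) A₀ A
      = -2 * ∑ e ∈ G.edgeFinset, w e * altSum (disjointIndicator e) A₀ A := by
  rw [← altSumₗ_apply, cutFun_eq_sum, map_sum, mul_sum]
  refine sum_congr rfl fun e _ => ?_
  rw [map_smul, altSumₗ_apply, altSum_cutIndicator hk e A₀ hA, smul_eq_mul]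
  ring

end Graph

theorem stmt9 {V : Type*} [Fintype V] (G : SimpleGraph V)
    (w : Sym2 V → ℝ) (hw : ∀ e, 0 ≤ w e) :
    (incFun G w ∅ = 0 ∧ ∀ (k : ℕ), 1 ≤ k → ∀ (A₀ : Set V) (A : Fin k → Set V),
        altSum (incFun G w) A₀ A ≤ 0) ∧
    (cutFun G w ∅ = 0 ∧ ∀ (k : ℕ), 2 ≤ k → ∀ (A₀ : Set V) (A : Fin k → Set V),
        (∀ i, Disjoint A₀ (A i)) → (∀ i j, i ≠ j → Disjoint (A i) (A j)) →
        altSum (cutFun G w) A₀ A ≤ 0) ∧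
    (∀ (k : ℕ), 3 ≤ k → ∀ (A₀ : Set V) (A : Fin k → Set V),
        (∀ i, Disjoint A₀ (A i)) → (∀ i j, i ≠ j → Disjoint (A i) (A j)) →
        altSum (cutFun G w) A₀ A = 0) := by
  classical
  have hsum_nonneg {k : ℕ} (A₀ : Set V) (A : Fin k → Set V) :
      0 ≤ ∑ e ∈ G.edgeFinset, w e * altSum (disjointIndicator e) A₀ A :=
    sum_nonneg fun e _ => mul_nonneg (hw e) (altSum_disjointIndicator_nonneg _ A₀ A)
  refine ⟨⟨by simp [incFun], fun k hk A₀ A => ?_⟩, ⟨by simp [cutFun], fun k hk A₀ A _ hA => ?_⟩,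
    fun k hk A₀ A _ hA => ?_⟩
  · rw [altSum_incFun G w (by omega)]
    linarith [hsum_nonneg A₀ A]
  · rw [altSum_cutFun G w hk A₀ fun i j => hA i j]
    linarith [hsum_nonneg A₀ A]
  · rw [altSum_cutFun G w (by omega) A₀ fun i j => hA i j]
    refine mul_eq_zero_of_right _ <| sum_eq_zero fun e _ => mul_eq_zero_of_right _ ?_
    exact altSum_disjointIndicator_eq_zero (Set.toFinite _)
      ((Sym2.ncard_coe_le_two e).trans_lt hk) A₀ fun i j => hA i j
end

section
/- The rank function of a loopless matroid M is 3-alternating if and only if every circuit of M has size at most 2 (equivalently M is a partition matroid with upper bound 1 on each class). In particular, if M has a circuit C of size at least 3, then for any partition of C into nonempty parts A_1, A_2, A_3 one has V_r(∅; A_1, A_2, A_3) = 1 > 0. -/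
/-!
If every circuit has at most two elements, `r {x, y} ≤ 1` is an equivalence relation
(parallelism) and `r X` is the number of parallel classes meeting `X`. For such a coverage count
the alternating sum is, point by point, minus the number of classes met by every `A i` but not by
`A₀`, hence `≤ 0`.

Conversely, on a circuit `C` the rank equals the cardinality on proper subsets and `|C| - 1` on
`C`. For a partition of `C` into `k ≥ 2` nonempty parts the alternating sum therefore differs from
the one for cardinality (which vanishes, the parts having empty intersection) only in the full
term, and equals `(-1) ^ (k + 1)`; for `k = 3` this is `1 > 0`.
-/

/-- `altSumZ r A₀ A = Σ_{K ⊆ [k]} (-1)^{|K|} r(A₀ ∪ ⋃_{i∈K} A_i)` (integer valued). -/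
noncomputable def altSumZ {J : Type*} (r : Set J → ℤ) (A₀ : Set J) {k : ℕ}
    (A : Fin k → Set J) : ℤ :=
  ∑ K : Finset (Fin k), (-1 : ℤ) ^ K.card * r (A₀ ∪ ⋃ i ∈ K, A i)

/-- `r` satisfies the matroid rank axioms on the finite set `J`. -/
def IsRankFn {J : Type*} [Fintype J] (r : Set J → ℤ) : Prop :=
  r ∅ = 0 ∧ (∀ X Y : Set J, X ⊆ Y → r X ≤ r Y) ∧
    (∀ X : Set J, r X ≤ X.ncard) ∧
    (∀ X Y : Set J, r (X ∩ Y) + r (X ∪ Y) ≤ r X + r Y)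

/-- A circuit: a minimal dependent set. -/
def IsCircuit {J : Type*} [Fintype J] (r : Set J → ℤ) (C : Set J) : Prop :=
  r C < C.ncard ∧ ∀ Y : Set J, Y ⊂ C → r Y = Y.ncard

open Function

theorem sum_neg_one_pow_mul_indicator_union {β : Type*} {k : ℕ} [NeZero k] (B₀ : Set β)
    (B : Fin k → Set β) (x : β) :
    ∑ K : Finset (Fin k), (-1 : ℤ) ^ K.card * (B₀ ∪ ⋃ i ∈ K, B i).indicator 1 x =
      -(B₀ᶜ ∩ ⋂ i, B i).indicator 1 x := by
  classical
  have hsum : ∑ K : Finset (Fin k), (-1 : ℤ) ^ K.card = 0 := by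
    simp [← Finset.powerset_univ, Finset.sum_powerset_neg_one_pow_card,
      Finset.univ_nonempty.ne_empty]
  by_cases hx : x ∈ B₀
  · simp [hx, hsum]
  set S := Finset.univ.filter fun i => x ∉ B i
  have hmem : ∀ K : Finset (Fin k), x ∈ B₀ ∪ ⋃ i ∈ K, B i ↔ ¬K ⊆ S := by
    simp [S, Finset.subset_iff, hx]
  have hinter : x ∈ B₀ᶜ ∩ ⋂ i, B i ↔ S = ∅ := by
    simp [S, Finset.filter_eq_empty_iff, hx]
  have hterm : ∀ K : Finset (Fin k),
      (-1 : ℤ) ^ K.card * (B₀ ∪ ⋃ i ∈ K, B i).indicator 1 x =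
        (-1) ^ K.card - if K ∈ S.powerset then (-1) ^ K.card else 0 := by
    intro K
    by_cases hK : K ⊆ S <;> simp [hmem, hK]
  rw [Finset.sum_congr rfl fun K _ => hterm K, Finset.sum_sub_distrib, hsum, Finset.sum_ite_mem,
    Finset.univ_inter, Finset.sum_powerset_neg_one_pow_card]
  simp [Set.indicator_apply, hinter]

theorem Set.ncard_eq_sum_indicator {β : Type*} [Fintype β] (X : Set β) :
    (X.ncard : ℤ) = ∑ x, X.indicator 1 x := by
  classical
  simp [Set.indicator_apply, Finset.sum_boole, Set.ncard_eq_toFinset_card']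

theorem altSumZ_ncard {β : Type*} [Finite β] {k : ℕ} [NeZero k] (B₀ : Set β)
    (B : Fin k → Set β) :
    altSumZ (fun X => (X.ncard : ℤ)) B₀ B = -((B₀ᶜ ∩ ⋂ i, B i).ncard : ℤ) := by
  have := Fintype.ofFinite β
  simp only [altSumZ, Set.ncard_eq_sum_indicator, Finset.mul_sum]
  rw [Finset.sum_comm, ← Finset.sum_neg_distrib]
  exact Finset.sum_congr rfl fun x _ => sum_neg_one_pow_mul_indicator_union B₀ B x

theorem altSumZ_nonpos_of_eq_ncard_image {J β : Type*} [Finite β] {r : Set J → ℤ}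
    {φ : J → β} (hr : ∀ X, r X = (φ '' X).ncard) {k : ℕ} [NeZero k] (A₀ : Set J)
    (A : Fin k → Set J) :
    altSumZ r A₀ A ≤ 0 := by
  have hpush : altSumZ r A₀ A = altSumZ (fun X => (X.ncard : ℤ)) (φ '' A₀) (φ '' A ·) := by
    simp only [altSumZ, hr, Set.image_union, Set.image_iUnion₂]
  rw [hpush, altSumZ_ncard]
  exact neg_nonpos.2 (Nat.cast_nonneg _)

theorem Set.biUnion_ssubset_iUnion {ι α : Type*} [Fintype ι] {A : ι → Set α}
    (hne : ∀ i, (A i).Nonempty) (hdisj : Pairwise (Disjoint on A)) {K : Finset ι}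
    (hK : K ≠ Finset.univ) :
    ⋃ i ∈ K, A i ⊂ ⋃ i, A i := by
  obtain ⟨j, hj⟩ : ∃ j, j ∉ K := by simpa [Finset.eq_univ_iff_forall] using hK
  obtain ⟨z, hz⟩ := hne j
  refine ssubset_of_subset_not_subset (Set.iUnion₂_subset fun i _ => Set.subset_iUnion A i)
    fun h => ?_
  obtain ⟨i, hi, hzi⟩ := Set.mem_iUnion₂.1 (h (Set.mem_iUnion_of_mem j hz))
  exact Set.disjoint_left.1 (hdisj (ne_of_mem_of_not_mem hi hj)) hzi hz

theorem Set.exists_fin_three_partition {α : Type*} {C : Set α} (hC : 3 ≤ C.ncard) :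
    ∃ A : Fin 3 → Set α,
      (∀ i, (A i).Nonempty) ∧ Pairwise (Disjoint on A) ∧ ⋃ i, A i = C := by
  have hfin : C.Finite := Set.finite_of_ncard_pos (by omega)
  obtain ⟨a, b, ha, hb, hab⟩ := (Set.one_lt_ncard_iff hfin).1 (by omega)
  have hrest : (C \ {a, b}).Nonempty := Set.sdiff_nonempty.2 fun h => by
    have := Set.ncard_le_ncard h
    rw [Set.ncard_pair hab] at this
    omega
  refine ⟨![{a}, {b}, C \ {a, b}], ?_, ?_, ?_⟩
  · intro i
    fin_cases i <;> simp [hrest]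
  · intro i j hij
    fin_cases i <;> fin_cases j <;> simp_all [Function.onFun, hab.symm]
  · ext z
    simp [Fin.exists_fin_succ]
    by_cases hza : z = a <;> by_cases hzb : z = b <;> simp_all

def parallelClass {J : Type*} (r : Set J → ℤ) (x : J) : Set J := {y | r {x, y} ≤ 1}

section RankFunction

variable {J : Type*} [Fintype J] {r : Set J → ℤ}

namespace IsRankFn

theorem rank_empty (hr : IsRankFn r) : r ∅ = 0 := hr.1

theorem rank_mono (hr : IsRankFn r) {X Y : Set J} (h : X ⊆ Y) : r X ≤ r Y := hr.2.1 X Y h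

theorem rank_le_ncard (hr : IsRankFn r) (X : Set J) : r X ≤ X.ncard := hr.2.2.1 X

theorem rank_inter_add_rank_union_le (hr : IsRankFn r) (X Y : Set J) :
    r (X ∩ Y) + r (X ∪ Y) ≤ r X + r Y := hr.2.2.2 X Y

theorem exists_isCircuit_subset (hr : IsRankFn r) {X : Set J} (hX : r X < X.ncard) :
    ∃ C ⊆ X, IsCircuit r C := by
  obtain ⟨C, hCX, hC, hmin⟩ :=
    exists_minimal_le_of_wellFoundedLT (fun Y : Set J => r Y < Y.ncard) X hX
  refine ⟨C, hCX, hC, fun Y hY => (hr.rank_le_ncard Y).antisymm ?_⟩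
  by_contra! hlt
  exact hY.2 (hmin hlt hY.1)

theorem rank_insert_eq (hr : IsRankFn r) (hl : ∀ x, r {x} = 1) {X : Set J} {x y : J}
    (hx : x ∈ X) (hxy : r {x, y} ≤ 1) : r (insert y X) = r X := by
  have hsub := hr.rank_inter_add_rank_union_le X {x, y}
  have hcap : r {x} ≤ r (X ∩ {x, y}) := hr.rank_mono (by simp [hx])
  have hcup : X ∪ {x, y} = insert y X := by
    rw [Set.union_insert, Set.union_singleton, Set.insert_eq_of_mem (Set.mem_insert_of_mem y hx)]
  rw [hcup] at hsub
  rw [hl] at hcap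
  linarith [hr.rank_mono (Set.subset_insert y X)]

theorem rank_pair_le_one_trans (hr : IsRankFn r) (hl : ∀ x, r {x} = 1) {x y z : J}
    (hxy : r {x, y} ≤ 1) (hxz : r {x, z} ≤ 1) : r {y, z} ≤ 1 :=
  calc r {y, z} ≤ r (insert z {x, y}) := hr.rank_mono (by intro; simp; tauto)
    _ = r {x, y} := hr.rank_insert_eq hl (by simp) hxz
    _ ≤ 1 := hxy

end IsRankFn

theorem IsCircuit.rank_eq (hr : IsRankFn r) {C : Set J} (hC : IsCircuit r C) :
    r C = C.ncard - 1 := by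
  obtain ⟨x, hx⟩ : C.Nonempty := by
    rw [Set.nonempty_iff_ne_empty]
    rintro rfl
    simpa [hr.rank_empty] using hC.1
  have hdel := hC.2 _ (Set.sdiff_singleton_ssubset.2 hx)
  have hmono := hr.rank_mono (Set.sdiff_subset (s := C) (t := {x}))
  rw [Set.ncard_sdiff_singleton_of_mem hx, Nat.cast_pred ((Set.ncard_pos).2 ⟨x, hx⟩)] at hdel
  linarith [hC.1]

theorem IsCircuit.altSumZ_eq_of_partition (hr : IsRankFn r) {C : Set J} (hC : IsCircuit r C)
    {k : ℕ} (hk : 2 ≤ k)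
    {A : Fin k → Set J} (hne : ∀ i, (A i).Nonempty) (hdisj : Pairwise (Disjoint on A))
    (hU : ⋃ i, A i = C) :
    altSumZ r ∅ A = (-1) ^ (k + 1) := by
  have : NeZero k := ⟨by omega⟩
  have hrank : ∀ K : Finset (Fin k), r (∅ ∪ ⋃ i ∈ K, A i) =
      (∅ ∪ ⋃ i ∈ K, A i).ncard - if K = Finset.univ then 1 else 0 := by
    intro K
    rw [Set.empty_union]
    split_ifs with hK
    · simpa [hK, hU] using hC.rank_eq hr
    · rw [sub_zero]
      exact hC.2 _ (hU ▸ Set.biUnion_ssubset_iUnion hne hdisj hK)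
  have hinter : ⋂ i, A i = ∅ := by
    have h01 : (⟨0, by omega⟩ : Fin k) ≠ ⟨1, hk⟩ := by simp [Fin.ext_iff]
    exact Set.eq_empty_of_forall_notMem fun z hz =>
      Set.disjoint_left.1 (hdisj h01) (Set.mem_iInter.1 hz _) (Set.mem_iInter.1 hz _)
  calc altSumZ r ∅ A = altSumZ (fun X => (X.ncard : ℤ)) ∅ A - (-1) ^ k := by
        simp only [altSumZ, hrank, mul_sub, Finset.sum_sub_distrib, mul_ite, mul_one, mul_zero,
          Finset.sum_ite_eq', Finset.mem_univ, if_true, Finset.card_univ, Fintype.card_fin]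
    _ = (-1) ^ (k + 1) := by
        rw [altSumZ_ncard, hinter]
        simp [pow_succ]

theorem parallelClass_eq_iff (hr : IsRankFn r) (hl : ∀ x, r {x} = 1) {x y : J} :
    parallelClass r x = parallelClass r y ↔ r {x, y} ≤ 1 := by
  refine ⟨fun h => ?_, fun h => Set.ext fun z => ⟨hr.rank_pair_le_one_trans hl h, ?_⟩⟩
  · have hy : y ∈ parallelClass r y := by simp [parallelClass, hl]
    rwa [← h] at hy
  · exact hr.rank_pair_le_one_trans hl (by rwa [Set.pair_comm])

theorem rank_eq_ncard_of_injOn_parallelClass (hr : IsRankFn r) (hl : ∀ x, r {x} = 1)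
    (hsmall : ∀ C, IsCircuit r C → C.ncard ≤ 2) {X : Set J}
    (hinj : X.InjOn (parallelClass r)) :
    r X = X.ncard := by
  refine (hr.rank_le_ncard X).antisymm (not_lt.1 fun hX => ?_)
  obtain ⟨C, hCX, hCirc⟩ := hr.exists_isCircuit_subset hX
  have hdep := hCirc.1
  obtain h0 | h1 | h2 : C.ncard = 0 ∨ C.ncard = 1 ∨ C.ncard = 2 := by
    have := hsmall C hCirc
    omega
  · rw [Set.ncard_eq_zero] at h0
    simp [h0, hr.rank_empty] at hdep
  · obtain ⟨a, rfl⟩ := Set.ncard_eq_one.1 h1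
    simp [hl] at hdep
  · obtain ⟨a, b, hab, rfl⟩ := Set.ncard_eq_two.1 h2
    rw [Set.ncard_pair hab] at hdep
    refine hab (hinj (hCX (by simp)) (hCX (by simp)) ((parallelClass_eq_iff hr hl).2 ?_))
    push_cast at hdep
    omega

theorem rank_eq_ncard_image_parallelClass (hr : IsRankFn r) (hl : ∀ x, r {x} = 1)
    (hsmall : ∀ C, IsCircuit r C → C.ncard ≤ 2) (X : Set J) :
    r X = (parallelClass r '' X).ncard := by
  induction hn : X.ncard using Nat.strong_induction_on generalizing X with
  | _ n ih =>
  by_cases hinj : X.InjOn (parallelClass r)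
  · rw [hinj.ncard_image]
    exact rank_eq_ncard_of_injOn_parallelClass hr hl hsmall hinj
  obtain ⟨x, hx, y, hy, hxy, hne⟩ :
      ∃ x ∈ X, ∃ y ∈ X, parallelClass r x = parallelClass r y ∧ x ≠ y := by
    simpa [Set.InjOn] using hinj
  have hx' : x ∈ X \ {y} := ⟨hx, hne⟩
  have hX : insert y (X \ {y}) = X := Set.insert_sdiff_self_of_mem hy
  have hrank : r X = r (X \ {y}) := by
    rw [← hr.rank_insert_eq hl hx' ((parallelClass_eq_iff hr hl).1 hxy), hX]
  have hy' : parallelClass r y ∈ parallelClass r '' (X \ {y}) := ⟨x, hx', hxy⟩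
  have himage : parallelClass r '' X = parallelClass r '' (X \ {y}) := by
    nth_rewrite 1 [← hX]
    rw [Set.image_insert_eq, Set.insert_eq_of_mem hy']
  rw [hrank, himage, ih _ (hn ▸ Set.ncard_sdiff_singleton_lt_of_mem hy) _ rfl]

end RankFunction

theorem stmt10 {J : Type*} [Fintype J] (r : Set J → ℤ)
    (hr : IsRankFn r) (hloopless : ∀ x : J, r {x} = 1) :
    ((∀ (A₀ : Set J) (A : Fin 3 → Set J), altSumZ r A₀ A ≤ 0) ↔
      (∀ C : Set J, IsCircuit r C → C.ncard ≤ 2)) ∧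
    (∀ C : Set J, IsCircuit r C → 3 ≤ C.ncard →
      ∀ A : Fin 3 → Set J, (∀ i, (A i).Nonempty) →
        (∀ i j, i ≠ j → Disjoint (A i) (A j)) → (⋃ i, A i) = C →
        altSumZ r ∅ A = 1) := by
  have hpartition : ∀ C : Set J, IsCircuit r C → ∀ A : Fin 3 → Set J,
      (∀ i, (A i).Nonempty) → Pairwise (Disjoint on A) → (⋃ i, A i) = C →
        altSumZ r ∅ A = 1 :=
    fun C hC A hne hdisj hU => by
      simpa using hC.altSumZ_eq_of_partition hr (by norm_num) hne hdisj hU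
  refine ⟨⟨fun halt C hC => ?_, fun hsmall A₀ A => ?_⟩,
    fun C hC _ A hne hdisj hU => hpartition C hC A hne (fun i j => hdisj i j) hU⟩
  · by_contra! h3
    obtain ⟨A, hne, hdisj, hU⟩ := Set.exists_fin_three_partition h3
    have := halt ∅ A
    rw [hpartition C hC A hne hdisj hU] at this
    omega
  · exact altSumZ_nonpos_of_eq_ncard_image
      (rank_eq_ncard_image_parallelClass hr hloopless hsmall) A₀ A
end

section
/- Let J be a finite set, φ : 2^J → ℝ submodular, and X ⊆ Y ⊆ J such that φ is modular on every pair A, B with X ⊆ A, B ⊆ Y. Then for every T with X ⊆ T ⊆ Y, φ(T) = φ(X) + Σ_{t ∈ T \ X} (φ(X + t) − φ(X)). -/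
/-! Modularity on the interval `[X, Y]` makes `φ` additive over the elements added to `X`:
adding `a` to `X ∪ S` is the union of `X ∪ S` and `insert a X`, which meet exactly in `X`,
so it raises `φ` by `φ (insert a X) - φ X`. Induction on `S` then gives the formula. -/

namespace Finset

variable {J : Type*} [DecidableEq J] {φ : Finset J → ℝ} {X Y : Finset J}

theorem apply_union_insert_of_modular
    (hmod : ∀ A B : Finset J, X ⊆ A → A ⊆ Y → X ⊆ B → B ⊆ Y →
      φ A + φ B = φ (A ∩ B) + φ (A ∪ B))
    {S : Finset J} {a : J} (haX : a ∉ X) (haS : a ∉ S) (hY : X ∪ insert a S ⊆ Y) :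
    φ (X ∪ insert a S) = φ (X ∪ S) + (φ (insert a X) - φ X) := by
  have hinter : (X ∪ S) ∩ insert a X = X := by
    ext x
    by_cases hx : x = a
    · subst hx; simp [haX, haS]
    · simp only [mem_inter, mem_union, mem_insert, hx, false_or]; tauto
  have hunion : (X ∪ S) ∪ insert a X = X ∪ insert a S := by
    ext x; simp only [mem_union, mem_insert]; tauto
  have h := hmod (X ∪ S) (insert a X) subset_union_left
    ((union_subset_union_right (subset_insert a S)).trans hY) (subset_insert a X)
    (insert_subset (hY (mem_union_right X (mem_insert_self a S)))
      (subset_union_left.trans hY))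
  rw [hinter, hunion] at h
  linarith

theorem apply_union_eq_add_sum_of_modular
    (hmod : ∀ A B : Finset J, X ⊆ A → A ⊆ Y → X ⊆ B → B ⊆ Y →
      φ A + φ B = φ (A ∩ B) + φ (A ∪ B))
    (S : Finset J) (hXS : Disjoint X S) (hY : X ∪ S ⊆ Y) :
    φ (X ∪ S) = φ X + ∑ t ∈ S, (φ (insert t X) - φ X) := by
  induction S using Finset.induction_on with
  | empty => simp
  | insert a S haS ih =>
    have haX : a ∉ X := disjoint_right.mp hXS (mem_insert_self a S)
    rw [apply_union_insert_of_modular hmod haX haS hY, sum_insert haS,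
      ih (disjoint_of_subset_right (subset_insert a S) hXS)
        ((union_subset_union_right (subset_insert a S)).trans hY)]
    ring

end Finset

theorem stmt13_general {J : Type*} [DecidableEq J] (φ : Finset J → ℝ)
    (X Y : Finset J)
    (hmod : ∀ A B : Finset J, X ⊆ A → A ⊆ Y → X ⊆ B → B ⊆ Y →
      φ A + φ B = φ (A ∩ B) + φ (A ∪ B)) :
    ∀ T : Finset J, X ⊆ T → T ⊆ Y →
      φ T = φ X + ∑ t ∈ T \ X, (φ (insert t X) - φ X) := by
  intro T hXT hTY
  have hT : X ∪ (T \ X) = T := Finset.union_sdiff_of_subset hXT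
  have h := Finset.apply_union_eq_add_sum_of_modular hmod (T \ X) Finset.disjoint_sdiff
    (hT.symm ▸ hTY)
  rwa [hT] at h

/-- If `φ` is submodular on a finite set and modular on every pair between `X`
and `Y`, then `φ(T) = φ(X) + Σ_{t ∈ T \ X} (φ(X + t) − φ(X))` for `X ⊆ T ⊆ Y`. -/
theorem stmt13 {J : Type*} [DecidableEq J] [Fintype J] (φ : Finset J → ℝ)
    (hsub : ∀ A B : Finset J, φ (A ∩ B) + φ (A ∪ B) ≤ φ A + φ B)
    (X Y : Finset J) (hXY : X ⊆ Y)
    (hmod : ∀ A B : Finset J, X ⊆ A → A ⊆ Y → X ⊆ B → B ⊆ Y →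
      φ A + φ B = φ (A ∩ B) + φ (A ∪ B)) :
    ∀ T : Finset J, X ⊆ T → T ⊆ Y →
      φ T = φ X + ∑ t ∈ T \ X, (φ (insert t X) - φ X) :=
  stmt13_general φ X Y hmod
end

section
/- For every positive integer n, the set function φ on J = {a_1, ..., a_{2n}} defined with A = {a_1, ..., a_n} by φ(X) = 0 if X ⊆ A or A ⊆ X, and φ(X) = 1 otherwise, is submodular, and for every decomposition φ = φ_1 + φ_2 with φ_1 increasing submodular, φ_2 decreasing submodular and φ_1(∅)=φ_2(∅)=0, one has φ_1(J) ≥ n. -/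
/-- On a `2n`-element set `J` with `A ⊆ J` of size `n`, the function `φ` with
`φ(X) = 0` if `X ⊆ A` or `A ⊆ X` and `φ(X) = 1` otherwise is submodular, and
every monotonic sum-decomposition `φ = φ₁ + φ₂` satisfies `φ₁(J) ≥ n`. -/
theorem stmt14 {J : Type*} [DecidableEq J] [Fintype J] (n : ℕ) (hn : 0 < n)
    (hcard : Fintype.card J = 2 * n) (A : Finset J) (hA : A.card = n)
    (φ : Finset J → ℝ)
    (hφ : ∀ X : Finset J, φ X = if X ⊆ A ∨ A ⊆ X then 0 else 1) :
    (∀ X Y : Finset J, φ (X ∩ Y) + φ (X ∪ Y) ≤ φ X + φ Y) ∧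
    (∀ φ₁ φ₂ : Finset J → ℝ, φ₁ ∅ = 0 → φ₂ ∅ = 0 →
      (∀ X Y : Finset J, X ⊆ Y → φ₁ X ≤ φ₁ Y) →
      (∀ X Y : Finset J, φ₁ (X ∩ Y) + φ₁ (X ∪ Y) ≤ φ₁ X + φ₁ Y) →
      (∀ X Y : Finset J, X ⊆ Y → φ₂ Y ≤ φ₂ X) →
      (∀ X Y : Finset J, φ₂ (X ∩ Y) + φ₂ (X ∪ Y) ≤ φ₂ X + φ₂ Y) →
      (∀ X : Finset J, φ X = φ₁ X + φ₂ X) →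
      (n : ℝ) ≤ φ₁ Finset.univ) := by
  constructor
  · -- submodularity of φ
    intro X Y
    have h1 : X ⊆ A → X ∩ Y ⊆ A := fun h => (Finset.inter_subset_left).trans h
    have h2 : Y ⊆ A → X ∩ Y ⊆ A := fun h => (Finset.inter_subset_right).trans h
    have h3 : A ⊆ X → A ⊆ X ∪ Y := fun h => h.trans Finset.subset_union_left
    have h4 : A ⊆ Y → A ⊆ X ∪ Y := fun h => h.trans Finset.subset_union_right
    have h5 : X ⊆ A → Y ⊆ A → X ∪ Y ⊆ A := Finset.union_subset
    have h6 : A ⊆ X → A ⊆ Y → A ⊆ X ∩ Y := Finset.subset_inter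
    have hle : ∀ Z : Finset J, 0 ≤ φ Z ∧ φ Z ≤ 1 := by
      intro Z; rw [hφ]; split_ifs <;> norm_num
    by_cases hX : X ⊆ A ∨ A ⊆ X
    · by_cases hY : Y ⊆ A ∨ A ⊆ Y
      · have hI : φ (X ∩ Y) = 0 := by
          rw [hφ]; apply if_pos
          rcases hX with h | h
          · exact Or.inl (h1 h)
          · rcases hY with h' | h'
            · exact Or.inl (h2 h')
            · exact Or.inr (h6 h h')
        have hU : φ (X ∪ Y) = 0 := by
          rw [hφ]; apply if_pos
          rcases hX with h | h
          · rcases hY with h' | h'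
            · exact Or.inl (h5 h h')
            · exact Or.inr (h4 h')
          · exact Or.inr (h3 h)
        rw [hφ X, if_pos hX, hφ Y, if_pos hY, hI, hU]; try norm_num
      · rw [hφ X, if_pos hX, hφ Y, if_neg hY]
        rcases hX with h | h
        · have hI : φ (X ∩ Y) = 0 := by rw [hφ]; exact if_pos (Or.inl (h1 h))
          have := (hle (X ∪ Y)).2; rw [hI]; linarith
        · have hU : φ (X ∪ Y) = 0 := by rw [hφ]; exact if_pos (Or.inr (h3 h))
          have := (hle (X ∩ Y)).2; rw [hU]; linarith
    · by_cases hY : Y ⊆ A ∨ A ⊆ Y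
      · rw [hφ X, if_neg hX, hφ Y, if_pos hY]
        rcases hY with h | h
        · have hI : φ (X ∩ Y) = 0 := by rw [hφ]; exact if_pos (Or.inl (h2 h))
          have := (hle (X ∪ Y)).2; rw [hI]; linarith
        · have hU : φ (X ∪ Y) = 0 := by rw [hφ]; exact if_pos (Or.inr (h4 h))
          have := (hle (X ∩ Y)).2; rw [hU]; linarith
      · rw [hφ X, if_neg hX, hφ Y, if_neg hY]
        have := (hle (X ∩ Y)).2; have := (hle (X ∪ Y)).2; linarith
  · intro φ₁ φ₂ h1e h2e hm1 hs1 hd2 hs2 hsum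
    -- Step 1: φ₂ (A ∪ S) ≤ φ₂ A + ∑ b in S, (φ₂ (insert b A) - φ₂ A) for S disjoint from A
    have step1 : ∀ S : Finset J, Disjoint S A →
        φ₂ (A ∪ S) ≤ φ₂ A + ∑ b ∈ S, (φ₂ (insert b A) - φ₂ A) := by
      intro S
      induction S using Finset.induction_on with
      | empty => simp
      | @insert b S hb ih =>
        intro hdisj
        rw [Finset.disjoint_insert_left] at hdisj
        obtain ⟨hbA, hSdisj⟩ := hdisj
        have hinter : (A ∪ S) ∩ insert b A = A := by
          ext x
          simp only [Finset.mem_inter, Finset.mem_union, Finset.mem_insert]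
          constructor
          · rintro ⟨hx1, hx2⟩
            rcases hx2 with rfl | h
            · rcases hx1 with h | h
              · exact absurd h hbA
              · exact absurd h hb
            · exact h
          · intro h; exact ⟨Or.inl h, Or.inr h⟩
        have hunion : (A ∪ S) ∪ insert b A = A ∪ insert b S := by
          ext x
          simp only [Finset.mem_union, Finset.mem_insert]
          tauto
        have hkey := hs2 (A ∪ S) (insert b A)
        rw [hinter, hunion] at hkey
        have hih := ih hSdisj
        rw [Finset.sum_insert hb]
        linarith
    -- Step 2: ∑ a in S, (φ₁ S - φ₁ (S.erase a)) ≤ φ₁ S - φ₁ ∅ for any S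
    have step2 : ∀ S : Finset J, ∑ a ∈ S, (φ₁ S - φ₁ (S.erase a)) ≤ φ₁ S - φ₁ ∅ := by
      intro S
      induction S using Finset.induction_on with
      | empty => simp
      | @insert x S hx ih =>
        rw [Finset.sum_insert hx, Finset.erase_insert hx]
        have hpt : ∀ a ∈ S, φ₁ (insert x S) - φ₁ ((insert x S).erase a)
            ≤ φ₁ S - φ₁ (S.erase a) := by
          intro a ha
          have hax : a ≠ x := fun h => hx (h ▸ ha)
          have hI : S ∩ (insert x S).erase a = S.erase a := by
            ext y
            simp only [Finset.mem_inter, Finset.mem_erase, Finset.mem_insert]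
            constructor
            · rintro ⟨hyS, hya, _⟩; exact ⟨hya, hyS⟩
            · rintro ⟨hya, hyS⟩; exact ⟨hyS, hya, Or.inr hyS⟩
          have hU : S ∪ (insert x S).erase a = insert x S := by
            ext y
            simp only [Finset.mem_union, Finset.mem_erase, Finset.mem_insert]
            constructor
            · rintro (hyS | ⟨_, h⟩)
              · exact Or.inr hyS
              · exact h
            · rintro (rfl | hyS)
              · exact Or.inr ⟨hax.symm, Or.inl rfl⟩
              · exact Or.inl hyS
          have := hs1 S ((insert x S).erase a)
          rw [hI, hU] at this
          linarith
        have hsumle := Finset.sum_le_sum hpt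
        linarith
    -- basic values of φ
    have hφ0 : ∀ X : Finset J, X ⊆ A ∨ A ⊆ X → φ X = 0 := by
      intro X hX; rw [hφ X, if_pos hX]
    have hφ1 : ∀ X : Finset J, ¬(X ⊆ A ∨ A ⊆ X) → φ X = 1 := by
      intro X hX; rw [hφ X, if_neg hX]
    -- Step 3: per b outside A and a in A : φ₂ (insert b A) ≤ φ₂ (A.erase a) - 1
    have step3 : ∀ b ∉ A, ∀ a ∈ A, φ₂ (insert b A) ≤ φ₂ (A.erase a) - 1 := by
      intro b hbA a ha
      have hab : a ≠ b := fun h => hbA (h ▸ ha)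
      set M := insert b (A.erase a) with hM
      have hMmixed : ¬(M ⊆ A ∨ A ⊆ M) := by
        rintro (h | h)
        · exact hbA (h (Finset.mem_insert_self b _))
        · have := h ha
          rw [hM, Finset.mem_insert] at this
          rcases this with h' | h'
          · exact hab h'
          · exact (Finset.mem_erase.mp h').1 rfl
      have hvM : φ M = 1 := hφ1 M hMmixed
      have hv1 : φ (insert b A) = 0 :=
        hφ0 _ (Or.inr (Finset.subset_insert b A))
      have hv2 : φ (A.erase a) = 0 := hφ0 _ (Or.inl (Finset.erase_subset a A))
      have e1 := hsum (insert b A)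
      have e2 := hsum M
      have e3 := hsum (A.erase a)
      rw [hv1] at e1
      rw [hvM] at e2
      rw [hv2] at e3
      -- φ₁ monotone : φ₁ M ≤ φ₁ (insert b A)
      have hMsub : M ⊆ insert b A := by
        rw [hM]
        exact Finset.insert_subset_insert b (Finset.erase_subset a A)
      have m1 := hm1 M (insert b A) hMsub
      -- φ₂ M ≤ φ₂ (A.erase a) + φ₂ {b}
      have hInt : A.erase a ∩ {b} = ∅ := by
        ext y
        simp only [Finset.mem_inter, Finset.mem_erase, Finset.mem_singleton,
          Finset.notMem_empty, iff_false, not_and]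
        rintro ⟨_, hyA⟩ rfl; exact hbA hyA
      have hUn : A.erase a ∪ {b} = M := by
        rw [hM, Finset.union_comm, Finset.insert_eq]
      have s1 := hs2 (A.erase a) {b}
      rw [hInt, hUn, h2e] at s1
      have d1 : φ₂ {b} ≤ 0 := by
        have := hd2 ∅ {b} (Finset.empty_subset _)
        rw [h2e] at this
        exact this
      linarith
    -- put things together
    have hφA : φ A = 0 := hφ0 A (Or.inl subset_rfl)
    have hφuniv : φ Finset.univ = 0 := hφ0 _ (Or.inr (Finset.subset_univ A))
    have hcardAc : (Aᶜ : Finset J).card = n := by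
      rw [Finset.card_compl, hA, hcard]; omega
    -- bijection between Aᶜ and A
    have hcardeq : (Aᶜ : Finset J).card = A.card := by rw [hcardAc, hA]
    let σ : (Aᶜ : Finset J) ≃ (A : Finset J) := Finset.equivOfCardEq hcardeq
    have hsum_le : ∑ b ∈ (Aᶜ : Finset J), (φ₂ (insert b A) - φ₂ A)
        ≤ (∑ a ∈ A, (φ₂ (A.erase a) - φ₂ A)) - n := by
      calc ∑ b ∈ (Aᶜ : Finset J), (φ₂ (insert b A) - φ₂ A)
          = ∑ x : (Aᶜ : Finset J), (φ₂ (insert x.1 A) - φ₂ A) :=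
            (Finset.sum_coe_sort _ _).symm
        _ ≤ ∑ x : (Aᶜ : Finset J), (φ₂ (A.erase (σ x).1) - φ₂ A - 1) := by
            apply Finset.sum_le_sum
            intro x _
            have hx : (x : J) ∉ A := Finset.mem_compl.mp x.2
            have := step3 x.1 hx (σ x).1 (σ x).2
            linarith
        _ = ∑ y : (A : Finset J), (φ₂ (A.erase y.1) - φ₂ A - 1) :=
            σ.sum_comp (fun y => φ₂ (A.erase y.1) - φ₂ A - 1)
        _ = ∑ a ∈ A, (φ₂ (A.erase a) - φ₂ A - 1) :=
            Finset.sum_coe_sort A (fun a => φ₂ (A.erase a) - φ₂ A - 1)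
        _ = (∑ a ∈ A, (φ₂ (A.erase a) - φ₂ A)) - n := by
            rw [Finset.sum_sub_distrib, Finset.sum_const, hA, nsmul_eq_mul, mul_one]
    -- Step 2 applied to A, rewritten with φ₂
    have step2A : ∑ a ∈ A, (φ₂ (A.erase a) - φ₂ A) ≤ -φ₂ A := by
      have hEq : ∀ a ∈ A, φ₂ (A.erase a) - φ₂ A = φ₁ A - φ₁ (A.erase a) := by
        intro a ha
        have e1 := hsum A
        have e2 := hsum (A.erase a)
        rw [hφA] at e1
        rw [hφ0 _ (Or.inl (Finset.erase_subset a A))] at e2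
        linarith
      rw [Finset.sum_congr rfl hEq]
      have := step2 A
      have eA := hsum A
      rw [hφA] at eA
      rw [h1e] at this
      linarith
    have h0 := step1 Aᶜ disjoint_compl_left
    rw [Finset.union_compl] at h0
    have euniv := hsum Finset.univ
    rw [hφuniv] at euniv
    linarith
end

section
/- For every positive integer n, the set function φ on a finite set J with |J| = n defined by φ(J) = −1 and φ(X) = 0 for X ≠ J is submodular, and for every decomposition φ = φ_1 − φ_2 where both φ_1 and φ_2 are increasing submodular with φ_1(∅)=φ_2(∅)=0, one has φ_2(J) ≥ n. -/
/-- On an `n`-element set `J`, the function with `φ(J) = −1` and `φ(X) = 0`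
otherwise is submodular, and every monotonic diff-decomposition `φ = φ₁ − φ₂`
satisfies `φ₂(J) ≥ n`. -/
theorem stmt15 {J : Type*} [DecidableEq J] [Fintype J] (n : ℕ) (hn : 0 < n)
    (hcard : Fintype.card J = n)
    (φ : Finset J → ℝ)
    (hφ : ∀ X : Finset J, φ X = if X = Finset.univ then -1 else 0) :
    (∀ X Y : Finset J, φ (X ∩ Y) + φ (X ∪ Y) ≤ φ X + φ Y) ∧
    (∀ φ₁ φ₂ : Finset J → ℝ, φ₁ ∅ = 0 → φ₂ ∅ = 0 →
      (∀ X Y : Finset J, X ⊆ Y → φ₁ X ≤ φ₁ Y) →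
      (∀ X Y : Finset J, φ₁ (X ∩ Y) + φ₁ (X ∪ Y) ≤ φ₁ X + φ₁ Y) →
      (∀ X Y : Finset J, X ⊆ Y → φ₂ X ≤ φ₂ Y) →
      (∀ X Y : Finset J, φ₂ (X ∩ Y) + φ₂ (X ∪ Y) ≤ φ₂ X + φ₂ Y) →
      (∀ X : Finset J, φ X = φ₁ X - φ₂ X) →
      (n : ℝ) ≤ φ₂ Finset.univ) := by
  constructor
  · intro X Y
    by_cases hX : X = Finset.univ
    · subst hX
      rw [Finset.univ_inter, show Finset.univ ∪ Y = Finset.univ by simp]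
      linarith
    · by_cases hY : Y = Finset.univ
      · subst hY
        rw [Finset.inter_univ, show X ∪ Finset.univ = Finset.univ by simp]
      · have hXY : X ∩ Y ≠ Finset.univ := by
          intro h
          apply hX
          apply Finset.eq_univ_of_forall
          intro a
          have ha : a ∈ X ∩ Y := by rw [h]; exact Finset.mem_univ a
          exact (Finset.mem_inter.mp ha).1
        rw [hφ (X ∩ Y), hφ (X ∪ Y), hφ X, hφ Y]
        simp only [hXY, hX, hY, if_neg, if_false]
        split_ifs <;> norm_num
  · intro φ₁ φ₂ h1e h2e h1m h1s h2m h2s hdiff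
    -- each element's marginal at the top is at least 1
    have hmarg : ∀ j : J, 1 ≤ φ₂ Finset.univ - φ₂ (Finset.univ \ {j}) := by
      intro j
      have hne : (Finset.univ \ {j} : Finset J) ≠ Finset.univ := by
        intro h
        have : j ∈ (Finset.univ \ {j} : Finset J) := by
          rw [h]; exact Finset.mem_univ j
        simp at this
      have e1 : φ₁ (Finset.univ \ {j}) = φ₂ (Finset.univ \ {j}) := by
        have := hdiff (Finset.univ \ {j})
        rw [hφ] at this
        simp [hne] at this
        linarith
      have e2 : φ₁ (Finset.univ : Finset J) = φ₂ Finset.univ - 1 := by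
        have := hdiff (Finset.univ : Finset J)
        rw [hφ] at this
        simp at this
        linarith
      have := h1m (Finset.univ \ {j}) Finset.univ Finset.sdiff_subset
      rw [e1, e2] at this
      linarith
    -- chain inequality: sum of top marginals over S is ≤ φ₂ S
    have key : ∀ S : Finset J,
        (∑ j ∈ S, (φ₂ Finset.univ - φ₂ (Finset.univ \ {j}))) ≤ φ₂ S := by
      intro S
      induction S using Finset.induction_on with
      | empty => simp [h2e]
      | @insert a S' ha ih =>
        rw [Finset.sum_insert ha]
        have hsub := h2s (insert a S') (Finset.univ \ {a})
        have hI : insert a S' ∩ (Finset.univ \ {a}) = S' := by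
          ext x
          simp only [Finset.mem_inter, Finset.mem_insert, Finset.mem_sdiff,
            Finset.mem_univ, Finset.mem_singleton, true_and]
          constructor
          · rintro ⟨h | h, hx⟩
            · exact absurd h hx
            · exact h
          · intro h
            exact ⟨Or.inr h, fun hxa => ha (hxa ▸ h)⟩
        have hU : insert a S' ∪ (Finset.univ \ {a}) = Finset.univ := by
          ext x
          simp only [Finset.mem_union, Finset.mem_insert, Finset.mem_sdiff,
            Finset.mem_univ, Finset.mem_singleton, true_and]
          constructor
          · intro _; trivial
          · intro _
            by_cases hx : x = a
            · exact Or.inl (Or.inl hx)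
            · exact Or.inr hx
        rw [hI, hU] at hsub
        linarith
    have hkey := key Finset.univ
    have hsum : (∑ _j ∈ (Finset.univ : Finset J), (1 : ℝ)) ≤
        ∑ j ∈ (Finset.univ : Finset J), (φ₂ Finset.univ - φ₂ (Finset.univ \ {j})) :=
      Finset.sum_le_sum fun j _ => hmarg j
    simp only [Finset.sum_const, Finset.card_univ, hcard, nsmul_eq_mul, mul_one] at hsum
    linarith
end

section
/- Let J be a finite set. A function ψ : 2^J → ℝ is weakly infinite-alternating if and only if it can be written as ψ = φ − μ where φ is infinite-alternating and μ is a nonnegative charge (a nonnegative modular function vanishing on ∅). -/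
/-- Alternating sum for set functions on a finite domain. -/
noncomputable def altSumF {J : Type*} [DecidableEq J] (φ : Finset J → ℝ)
    (A₀ : Finset J) {k : ℕ} (A : Fin k → Finset J) : ℝ :=
  ∑ K : Finset (Fin k), (-1 : ℝ) ^ K.card * φ (A₀ ∪ K.biUnion A)

/-- `ψ` is weakly infinite-alternating. -/
def WeaklyInfAltF {J : Type*} [DecidableEq J] (ψ : Finset J → ℝ) : Prop :=
  ψ ∅ = 0 ∧ ∀ (k : ℕ), 2 ≤ k → ∀ (A₀ : Finset J) (A : Fin k → Finset J),
    (∀ i, Disjoint A₀ (A i)) → (∀ i j, i ≠ j → Disjoint (A i) (A j)) →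
    altSumF ψ A₀ A ≤ 0

/-- `φ` is infinite-alternating. -/
def InfAltF {J : Type*} [DecidableEq J] (φ : Finset J → ℝ) : Prop :=
  φ ∅ = 0 ∧ ∀ (k : ℕ), 1 ≤ k → ∀ (A₀ : Finset J) (A : Fin k → Finset J),
    altSumF φ A₀ A ≤ 0


/-! Adding the charge `c x := ∑ S, max 0 (ψ S - ψ (insert x S))` makes `φ := ψ + μ`, where
`μ X = ∑ x ∈ X, c x`, monotone without changing its alternating sums over disjoint families of at
least two sets. For a monotone `φ`, the alternating sum over an arbitrary family reduces to the
disjoint case by three moves, each lowering the total cardinality of the family: a member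
contained in `A₀` makes the sum vanish, a repeated member can be dropped, and a member `B ∪ C`
splits as `V(A₀; B ∪ C, …) = V(A₀; B, …) + V(A₀ ∪ B; C, …)`. What remains is a family of distinct
singletons outside `A₀`, where monotonicity (one set) or weak alternation (at least two)
applies. -/

namespace AltSum

variable {J : Type*} [DecidableEq J]

/-- `altSumF` for a family given as a list, so that the family can be permuted
(`altSumList_perm`). -/
def altSumList (ψ : Finset J → ℝ) : Finset J → List (Finset J) → ℝ
  | A₀, [] => ψ A₀
  | A₀, B :: L => altSumList ψ A₀ L - altSumList ψ (A₀ ∪ B) L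

@[simp] lemma altSumList_nil (ψ : Finset J → ℝ) (A₀ : Finset J) : altSumList ψ A₀ [] = ψ A₀ := rfl

@[simp] lemma altSumList_cons (ψ : Finset J → ℝ) (A₀ B : Finset J) (L : List (Finset J)) :
    altSumList ψ A₀ (B :: L) = altSumList ψ A₀ L - altSumList ψ (A₀ ∪ B) L := rfl

lemma powerset_univ_map_succEmb (k : ℕ) :
    (Finset.univ.map (Fin.succEmb k)).powerset =
      Finset.univ.image fun K : Finset (Fin k) => K.map (Fin.succEmb k) := by
  ext T
  simp [Finset.subset_map_iff, eq_comm]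

lemma biUnion_map_succEmb_cons {k : ℕ} (B : Finset J) (A : Fin k → Finset J)
    (K : Finset (Fin k)) : (K.map (Fin.succEmb k)).biUnion (Fin.cons B A) = K.biUnion A := by
  ext a
  simp [Fin.succEmb]

lemma altSumF_cons (φ : Finset J → ℝ) (A₀ B : Finset J) {k : ℕ} (A : Fin k → Finset J) :
    altSumF φ A₀ (Fin.cons B A) = altSumF φ A₀ A - altSumF φ (A₀ ∪ B) A := by
  have h0 : ∀ K : Finset (Fin k), (0 : Fin (k + 1)) ∉ K.map (Fin.succEmb k) := by
    simp [Fin.succEmb, Fin.succ_ne_zero]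
  unfold altSumF
  -- split the subsets of `Fin (k + 1)` according to whether they contain `0`
  rw [← Finset.powerset_univ, Fin.univ_succ, Finset.cons_eq_insert]
  -- `Fin.univ_succ` writes the embedding as a literal rather than as `Fin.succEmb k`
  change ∑ K ∈ (insert 0 (Finset.univ.map (Fin.succEmb k))).powerset, _ = _
  rw [Finset.sum_powerset_insert (h0 _), powerset_univ_map_succEmb,
    Finset.sum_image (Finset.map_injective _).injOn,
    Finset.sum_image (Finset.map_injective _).injOn, sub_eq_add_neg, ← Finset.sum_neg_distrib]
  congr 1 <;> refine Finset.sum_congr rfl fun K _ => ?_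
  · rw [Finset.card_map, biUnion_map_succEmb_cons]
  · rw [Finset.card_insert_of_notMem (h0 K), Finset.biUnion_insert, Finset.card_map,
      biUnion_map_succEmb_cons, Fin.cons_zero, pow_succ, ← Finset.union_assoc]
    ring

lemma altSumF_eq_altSumList (φ : Finset J → ℝ) {k : ℕ} (A₀ : Finset J) (A : Fin k → Finset J) :
    altSumF φ A₀ A = altSumList φ A₀ (List.ofFn A) := by
  induction k generalizing A₀ with
  | zero => simp [altSumF, Finset.univ_unique, Subsingleton.elim (default : Finset (Fin 0)) ∅]
  | succ k ih =>
    rw [← Fin.cons_self_tail A, altSumF_cons, List.ofFn_cons, altSumList_cons, ih, ih]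

lemma altSumList_perm (ψ : Finset J → ℝ) {L L' : List (Finset J)} (h : L.Perm L') (A₀ : Finset J) :
    altSumList ψ A₀ L = altSumList ψ A₀ L' := by
  induction h generalizing A₀ with
  | nil => rfl
  | cons _ _ ih => simp [ih]
  | swap =>
    simp only [altSumList_cons, Finset.union_right_comm]
    ring
  | trans _ _ ih₁ ih₂ => rw [ih₁, ih₂]

lemma altSumList_cons_union (ψ : Finset J → ℝ) (A₀ B C : Finset J) (L : List (Finset J)) :
    altSumList ψ A₀ ((B ∪ C) :: L) =
      altSumList ψ A₀ (B :: L) + altSumList ψ (A₀ ∪ B) (C :: L) := by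
  simp only [altSumList_cons, Finset.union_assoc]
  ring

lemma altSumList_cons_of_subset (ψ : Finset J → ℝ) {A₀ B : Finset J} (L : List (Finset J))
    (h : B ⊆ A₀) : altSumList ψ A₀ (B :: L) = 0 := by
  simp [Finset.union_eq_left.mpr h]

lemma altSumList_cons_cons_self (ψ : Finset J → ℝ) (A₀ B : Finset J) (L : List (Finset J)) :
    altSumList ψ A₀ (B :: B :: L) = altSumList ψ A₀ (B :: L) := by
  simp only [altSumList_cons, Finset.union_assoc, Finset.union_self]
  ring

lemma altSumList_add (f g : Finset J → ℝ) (A₀ : Finset J) (L : List (Finset J)) :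
    altSumList (f + g) A₀ L = altSumList f A₀ L + altSumList g A₀ L := by
  induction L generalizing A₀ with
  | nil => rfl
  | cons B L ih => simp only [altSumList_cons, ih]; ring

lemma altSumList_sub (f g : Finset J → ℝ) (A₀ : Finset J) (L : List (Finset J)) :
    altSumList (f - g) A₀ L = altSumList f A₀ L - altSumList g A₀ L := by
  induction L generalizing A₀ with
  | nil => rfl
  | cons B L ih => simp only [altSumList_cons, ih]; ring

lemma altSumList_charge_cons_cons (c : J → ℝ) (L : List (Finset J)) (S B C : Finset J)
    (hS : ∀ X ∈ B :: C :: L, Disjoint S X) (hL : (B :: C :: L).Pairwise Disjoint) :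
    altSumList (fun X => ∑ x ∈ X, c x) S (B :: C :: L) = 0 := by
  induction L generalizing S B C with
  | nil =>
    have hSB := hS B (by simp)
    have hSC := hS C (by simp)
    have hBC : Disjoint (S ∪ B) C :=
      Finset.disjoint_union_left.mpr ⟨hSC, List.rel_of_pairwise_cons hL (by simp)⟩
    simp only [altSumList_cons, altSumList_nil, Finset.sum_union hSB, Finset.sum_union hSC,
      Finset.sum_union hBC]
    ring
  | cons D L ih =>
    rw [List.pairwise_cons] at hL
    have hSB : ∀ X ∈ C :: D :: L, Disjoint (S ∪ B) X := fun X hX =>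
      Finset.disjoint_union_left.mpr ⟨hS X (List.mem_cons_of_mem _ hX), hL.1 X hX⟩
    rw [altSumList_cons, ih S C D (fun X hX => hS X (List.mem_cons_of_mem _ hX)) hL.2,
      ih (S ∪ B) C D hSB hL.2, sub_zero]

lemma altSumList_charge (c : J → ℝ) {S : Finset J} {L : List (Finset J)} (hlen : 2 ≤ L.length)
    (hS : ∀ X ∈ L, Disjoint S X) (hL : L.Pairwise Disjoint) :
    altSumList (fun X => ∑ x ∈ X, c x) S L = 0 := by
  match L, hlen with
  | B :: C :: L, _ => exact altSumList_charge_cons_cons c L S B C hS hL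

def DisjointAltSumNonpos (ψ : Finset J → ℝ) : Prop :=
  ∀ A₀ (L : List (Finset J)), 2 ≤ L.length → (∀ B ∈ L, Disjoint A₀ B) → L.Pairwise Disjoint →
    altSumList ψ A₀ L ≤ 0

variable {ψ : Finset J → ℝ}

lemma DisjointAltSumNonpos.add_charge (h : DisjointAltSumNonpos ψ) (c : J → ℝ) :
    DisjointAltSumNonpos (ψ + fun X => ∑ x ∈ X, c x) := fun A₀ _ hlen hA₀ hL => by
  rw [altSumList_add, altSumList_charge c hlen hA₀ hL, add_zero]
  exact h A₀ _ hlen hA₀ hL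

lemma weaklyInfAltF_iff : WeaklyInfAltF ψ ↔ ψ ∅ = 0 ∧ DisjointAltSumNonpos ψ := by
  refine and_congr_right fun _ => ⟨fun h A₀ L hlen hA₀ hL => ?_, fun h k hk A₀ A hA₀ hA => ?_⟩
  · have hget : ∀ i j, i ≠ j → Disjoint (L.get i) (L.get j) := fun i j hij =>
      hij.lt_or_gt.elim (List.pairwise_iff_get.mp hL i j)
        fun h => (List.pairwise_iff_get.mp hL j i h).symm
    simpa [altSumF_eq_altSumList] using h L.length hlen A₀ L.get (fun i => hA₀ _ (L.get_mem i)) hget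
  · rw [altSumF_eq_altSumList]
    exact h A₀ _ (by simpa using hk) (by simpa [List.mem_ofFn] using hA₀)
      (List.pairwise_ofFn.mpr fun i j hij => hA i j hij.ne)

lemma infAltF_iff :
    InfAltF ψ ↔ ψ ∅ = 0 ∧ ∀ A₀ (L : List (Finset J)), L ≠ [] → altSumList ψ A₀ L ≤ 0 := by
  refine and_congr_right fun _ => ⟨fun h A₀ L hL => ?_, fun h k hk A₀ A => ?_⟩
  · simpa [altSumF_eq_altSumList] using
      h L.length (List.length_pos_of_ne_nil hL) A₀ L.get
  · rw [altSumF_eq_altSumList]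
    exact h A₀ _ (by simpa [List.ofFn_eq_nil_iff] using Nat.one_le_iff_ne_zero.mp hk)

lemma altSumList_nonpos_of_singletons (hmono : ∀ S x, ψ S ≤ ψ (insert x S))
    (hweak : DisjointAltSumNonpos ψ)
    {A₀ : Finset J} {L : List (Finset J)} (hne : L ≠ []) (hnd : L.Nodup)
    (hsing : ∀ B ∈ L, ∃ x ∉ A₀, B = {x}) : altSumList ψ A₀ L ≤ 0 := by
  match L, hne with
  | [B], _ =>
    obtain ⟨x, -, rfl⟩ := hsing B (by simp)
    simpa [Finset.union_comm, ← Finset.insert_eq] using hmono A₀ x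
  | B :: C :: L, _ =>
    refine hweak A₀ _ (by simp) (fun X hX => ?_) (hnd.imp_of_mem fun hX hY hXY => ?_)
    · obtain ⟨x, hx, rfl⟩ := hsing X hX
      exact Finset.disjoint_singleton_right.mpr hx
    · obtain ⟨x, -, rfl⟩ := hsing _ hX
      obtain ⟨y, -, rfl⟩ := hsing _ hY
      exact Finset.disjoint_singleton.mpr fun h => hXY (h ▸ rfl)

omit [DecidableEq J] in
lemma cardSum_eq_of_perm {L L' : List (Finset J)} (h : L.Perm L') :
    (L.map Finset.card).sum = (L'.map Finset.card).sum :=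
  (h.map _).sum_eq

theorem altSumList_nonpos (hmono : ∀ S x, ψ S ≤ ψ (insert x S))
    (hweak : DisjointAltSumNonpos ψ)
    (A₀ : Finset J) {L : List (Finset J)} (hne : L ≠ []) : altSumList ψ A₀ L ≤ 0 := by
  induction hn : (L.map Finset.card).sum using Nat.strong_induction_on generalizing A₀ L with
  | _ n ih =>
  by_cases hsub : ∃ B ∈ L, B ⊆ A₀
  · obtain ⟨B, hB, hBA⟩ := hsub
    rw [altSumList_perm ψ (List.perm_cons_erase hB), altSumList_cons_of_subset ψ _ hBA]
  push Not at hsub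
  have hpos : ∀ B ∈ L, 0 < B.card := fun B hB =>
    Finset.card_pos.mpr ((Finset.sdiff_nonempty.mpr (hsub B hB)).mono Finset.sdiff_subset)
  by_cases hbig : ∃ B ∈ L, 2 ≤ B.card
  · obtain ⟨B, hB, hB2⟩ := hbig
    obtain ⟨L', hperm⟩ : ∃ L', L.Perm (B :: L') := ⟨_, List.perm_cons_erase hB⟩
    have hsum := cardSum_eq_of_perm hperm
    obtain ⟨x, hx⟩ := Finset.card_pos.mp (hpos B hB)
    have hcard := Finset.card_erase_of_mem hx
    rw [altSumList_perm ψ hperm, ← Finset.insert_erase hx, Finset.insert_eq,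
      altSumList_cons_union]
    simp only [List.map_cons, List.sum_cons] at hsum
    have h₁ := ih _ (by simp only [List.map_cons, List.sum_cons, Finset.card_singleton]; omega)
      A₀ (L := {x} :: L') (by simp) rfl
    have h₂ := ih _ (by simp only [List.map_cons, List.sum_cons]; omega)
      (A₀ ∪ {x}) (L := B.erase x :: L') (by simp) rfl
    linarith
  push Not at hbig
  by_cases hnd : L.Nodup
  · refine altSumList_nonpos_of_singletons hmono hweak hne hnd fun B hB => ?_
    have hB1 : B.card = 1 := by have := hpos B hB; have := hbig B hB; omega
    obtain ⟨x, rfl⟩ := Finset.card_eq_one.mp hB1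
    exact ⟨x, fun hx => hsub _ hB (Finset.singleton_subset_iff.mpr hx), rfl⟩
  · obtain ⟨B, hdup⟩ := List.exists_duplicate_iff_not_nodup.mpr hnd
    obtain ⟨L', hperm⟩ := (List.duplicate_iff_sublist.mp hdup).exists_perm_append
    have hsum := cardSum_eq_of_perm hperm
    simp only [List.cons_append, List.nil_append, List.map_cons, List.sum_cons] at hsum
    rw [altSumList_perm ψ hperm, List.cons_append, List.cons_append, List.nil_append,
      altSumList_cons_cons_self]
    have := hpos B hdup.mem
    exact ih _ (by simp only [List.map_cons, List.sum_cons]; omega) A₀ (by simp) rfl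

lemma add_charge_le_add_charge_insert (c : J → ℝ) (hc : ∀ S x, ψ S - ψ (insert x S) ≤ c x)
    (S : Finset J) (x : J) :
    (ψ + fun X => ∑ x ∈ X, c x) S ≤ (ψ + fun X => ∑ x ∈ X, c x) (insert x S) := by
  by_cases hx : x ∈ S
  · rw [Finset.insert_eq_self.mpr hx]
  · simp only [Pi.add_apply, Finset.sum_insert hx]
    linarith [hc S x]

lemma exists_nonneg_forall_sub_insert_le [Fintype J] (ψ : Finset J → ℝ) :
    ∃ c : J → ℝ, (∀ x, 0 ≤ c x) ∧ ∀ S x, ψ S - ψ (insert x S) ≤ c x :=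
  ⟨fun x => ∑ S, max 0 (ψ S - ψ (insert x S)),
    fun _ => Finset.sum_nonneg fun _ _ => le_max_left _ _,
    fun S x => (le_max_right _ _).trans <|
      Finset.single_le_sum (f := fun T => max 0 (ψ T - ψ (insert x T)))
        (fun _ _ => le_max_left _ _) (Finset.mem_univ S)⟩

end AltSum

open AltSum in
/-- A set function on a finite set is weakly infinite-alternating iff it is the
difference of an infinite-alternating function and a nonnegative charge. -/
theorem stmt16 {J : Type*} [DecidableEq J] [Fintype J] (ψ : Finset J → ℝ) :
    WeaklyInfAltF ψ ↔
      ∃ (φ : Finset J → ℝ) (c : J → ℝ), InfAltF φ ∧ (∀ x, 0 ≤ c x) ∧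
        ∀ X : Finset J, ψ X = φ X - ∑ x ∈ X, c x := by
  rw [weaklyInfAltF_iff]
  constructor
  · rintro ⟨h0, hweak⟩
    obtain ⟨c, hc0, hc⟩ := exists_nonneg_forall_sub_insert_le ψ
    refine ⟨_, c, infAltF_iff.mpr ⟨by simp [h0], fun A₀ _ => altSumList_nonpos
      (add_charge_le_add_charge_insert c hc) (hweak.add_charge c) A₀⟩, hc0, fun X => by simp⟩
  · rintro ⟨φ, c, hφ, -, hψ⟩
    obtain rfl : ψ = φ - fun X => ∑ x ∈ X, c x := funext hψ
    rw [infAltF_iff] at hφ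
    refine ⟨by simp [hφ.1], fun A₀ L hlen hA₀ hL => ?_⟩
    rw [altSumList_sub, altSumList_charge c hlen hA₀ hL, sub_zero]
    exact hφ.2 A₀ L (List.ne_nil_of_length_pos (by omega))
end

section
/- Let G = (V, E) be a finite simple graph, H the hypergraph on V whose hyperedges are the vertex sets of complete subgraphs of G, w : E → ℝ_{≥0}, and suppose d_w = φ_1 + φ_2 where φ_1 is increasing submodular and φ_2 is decreasing submodular with φ_1(∅)=φ_2(∅)=0. Then there exists a weight function w' on the cliques of G such that φ_1(X) = Σ_{K clique, K ⊆ X} w'(K) for all X ⊆ V. -/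
open Classical in
/-- The weighted cut function on a finite graph (Finset version). -/
noncomputable def cutW {V : Type*} [Fintype V] (G : SimpleGraph V)
    (w : Sym2 V → ℝ) (X : Finset V) : ℝ :=
  ∑ e ∈ G.edgeFinset, if (∃ u ∈ e, u ∈ X) ∧ (∃ u ∈ e, u ∉ X) then w e else 0

/-!
By Möbius inversion on the subset lattice, `φ₁ X = ∑_{K ⊆ X} μ K` with
`μ K = ∑_{S ⊆ K} (-1)^{|K \ S|} φ₁ S`, so it suffices that `μ K = 0` unless `K` is a nonempty
clique; `μ ∅ = φ₁ ∅ = 0`. If `a, b ∈ K` are distinct and non-adjacent, then `μ K` is an alternating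
sum of second differences `φ₁ (S + a + b) + φ₁ S - φ₁ (S + a) - φ₁ (S + b)`. These vanish: the
corresponding second differences of `d_w` vanish because no edge joins `a` and `b`, while those of
`φ₁` and `φ₂` are both `≤ 0` by submodularity, and they add up to those of `d_w`.
-/

open Finset

section Moebius

variable {V R : Type*} [DecidableEq V] [CommRing R]

noncomputable def moebius (φ : Finset V → R) (K : Finset V) : R :=
  ∑ S ∈ K.powerset, (-1) ^ (#K - #S) * φ S

lemma moebius_insert (φ : Finset V → R) {a : V} {K : Finset V} (ha : a ∉ K) :
    moebius φ (insert a K) = -moebius φ K + moebius (fun S => φ (insert a S)) K := by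
  unfold moebius
  rw [sum_powerset_insert ha, card_insert_of_notMem ha, ← sum_neg_distrib]
  congr 1
  · refine sum_congr rfl fun S hS => ?_
    have : #S ≤ #K := card_le_card (mem_powerset.1 hS)
    rw [show #K + 1 - #S = (#K - #S) + 1 by omega, pow_succ]
    ring
  · refine sum_congr rfl fun S hS => ?_
    rw [card_insert_of_notMem fun h => ha (mem_powerset.1 hS h)]
    congr 2
    omega

theorem sum_powerset_moebius (φ : Finset V → R) (X : Finset V) :
    ∑ K ∈ X.powerset, moebius φ K = φ X := by
  induction X using Finset.induction_on generalizing φ with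
  | empty => simp [moebius]
  | @insert a X ha ih =>
    have hsplit : ∀ K ∈ X.powerset, moebius φ (insert a K)
        = -moebius φ K + moebius (fun S => φ (insert a S)) K :=
      fun K hK => moebius_insert φ fun h => ha (mem_powerset.1 hK h)
    rw [sum_powerset_insert ha, sum_congr rfl hsplit, sum_add_distrib, sum_neg_distrib, ih, ih]
    ring

lemma moebius_insert_insert (φ : Finset V → R) {a b : V} {K : Finset V}
    (ha : a ∉ insert b K) (hb : b ∉ K) :
    moebius φ (insert a (insert b K)) = ∑ S ∈ K.powerset, (-1) ^ (#K - #S) *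
      (φ (insert a (insert b S)) + φ S - φ (insert a S) - φ (insert b S)) := by
  rw [moebius_insert φ ha, moebius_insert φ hb, moebius_insert (fun S => φ (insert a S)) hb]
  simp only [moebius, ← sum_neg_distrib, ← sum_add_distrib]
  refine sum_congr rfl fun S _ => ?_
  ring

end Moebius

section ModularPair

variable {V R : Type*} [DecidableEq V]

/-- `φ` has vanishing second differences in the directions `a` and `b`. -/
def IsModularPair [AddCommMonoid R] (φ : Finset V → R) (a b : V) : Prop :=
  ∀ S : Finset V, a ∉ S → b ∉ S →
    φ (insert a (insert b S)) + φ S = φ (insert a S) + φ (insert b S)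

lemma IsModularPair.moebius_eq_zero [CommRing R] {φ : Finset V → R} {a b : V}
    (h : IsModularPair φ a b) (hab : a ≠ b) {K : Finset V} (ha : a ∈ K) (hb : b ∈ K) :
    moebius φ K = 0 := by
  set K' := (K.erase a).erase b
  have hbK' : b ∉ K' := notMem_erase _ _
  have haK' : a ∉ K' := fun h => notMem_erase a K (mem_of_mem_erase h)
  have hK : K = insert a (insert b K') := by
    rw [insert_erase (mem_erase.2 ⟨hab.symm, hb⟩), insert_erase ha]
  rw [hK, moebius_insert_insert φ (by simp [hab, haK']) hbK']
  refine sum_eq_zero fun S hS => ?_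
  have hSK' := mem_powerset.1 hS
  rw [h S (fun h => haK' (hSK' h)) (fun h => hbK' (hSK' h))]
  ring

lemma add_insert_insert_le_of_submodular [AddCommMonoid R] [PartialOrder R]
    {φ : Finset V → R} (hφ : ∀ X Y, φ (X ∩ Y) + φ (X ∪ Y) ≤ φ X + φ Y) {a b : V} (hab : a ≠ b)
    {S : Finset V} (ha : a ∉ S) (hb : b ∉ S) :
    φ (insert a (insert b S)) + φ S ≤ φ (insert a S) + φ (insert b S) := by
  have hinter : insert a S ∩ insert b S = S := by
    rw [insert_inter_of_notMem (by simp [hab, ha]), inter_insert_of_notMem hb, inter_self]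
  have hunion : insert a S ∪ insert b S = insert a (insert b S) := by
    ext; simp only [mem_union, mem_insert]; tauto
  simpa [hinter, hunion, add_comm] using hφ (insert a S) (insert b S)

lemma IsModularPair.of_add_left [AddCommGroup R] [PartialOrder R] [IsOrderedAddMonoid R]
    {φ ψ : Finset V → R} (hφ : ∀ X Y, φ (X ∩ Y) + φ (X ∪ Y) ≤ φ X + φ Y)
    (hψ : ∀ X Y, ψ (X ∩ Y) + ψ (X ∪ Y) ≤ ψ X + ψ Y) {a b : V} (hab : a ≠ b)
    (h : IsModularPair (φ + ψ) a b) : IsModularPair φ a b := by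
  intro S ha hb
  have h₁ := add_insert_insert_le_of_submodular hφ hab ha hb
  have h₂ := add_insert_insert_le_of_submodular hψ hab ha hb
  have h₁₂ := h S ha hb
  simp only [Pi.add_apply] at h₁₂
  refine le_antisymm h₁ (le_of_add_le_add_right (a := ψ (insert a (insert b S)) + ψ S) ?_)
  calc φ (insert a S) + φ (insert b S) + (ψ (insert a (insert b S)) + ψ S)
      ≤ φ (insert a S) + φ (insert b S) + (ψ (insert a S) + ψ (insert b S)) := by gcongr
    _ = φ (insert a (insert b S)) + φ S + (ψ (insert a (insert b S)) + ψ S) := by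
      rw [← sub_eq_zero, ← sub_eq_zero.2 h₁₂.symm]
      abel

lemma isModularPair_of_insert_left [AddCommMonoid R] {g : Finset V → R} {a : V} (b : V)
    (hg : ∀ T, g (insert a T) = g T) : IsModularPair g a b := by
  intro S _ _
  rw [hg, hg, add_comm]

lemma isModularPair_of_insert_right [AddCommMonoid R] {g : Finset V → R} (a : V) {b : V}
    (hg : ∀ T, g (insert b T) = g T) : IsModularPair g a b := by
  intro S _ hb
  rw [insert_comm, hg, hg]

lemma IsModularPair.sum [AddCommMonoid R] {ι : Type*} {s : Finset ι} {g : ι → Finset V → R}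
    {a b : V} (h : ∀ i ∈ s, IsModularPair (g i) a b) :
    IsModularPair (fun X => ∑ i ∈ s, g i X) a b := by
  intro S ha hb
  simp only [← sum_add_distrib]
  exact sum_congr rfl fun i hi => h i hi S ha hb

end ModularPair

section Cut

variable {V : Type*} [DecidableEq V]

lemma crosses_insert_iff_of_notMem {e : Sym2 V} {c : V} (hc : c ∉ e) (T : Finset V) :
    ((∃ u ∈ e, u ∈ insert c T) ∧ ∃ u ∈ e, u ∉ insert c T) ↔
      ((∃ u ∈ e, u ∈ T) ∧ ∃ u ∈ e, u ∉ T) := by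
  have hmem : ∀ u ∈ e, (u ∈ insert c T ↔ u ∈ T) := fun u hu => by
    simp [mem_insert, show u ≠ c from fun h => hc (h ▸ hu)]
  constructor
  · rintro ⟨⟨u, hu, huT⟩, ⟨v, hv, hvT⟩⟩
    exact ⟨⟨u, hu, (hmem u hu).1 huT⟩, ⟨v, hv, mt (hmem v hv).2 hvT⟩⟩
  · rintro ⟨⟨u, hu, huT⟩, ⟨v, hv, hvT⟩⟩
    exact ⟨⟨u, hu, (hmem u hu).2 huT⟩, ⟨v, hv, mt (hmem v hv).1 hvT⟩⟩

open Classical in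
/-- Every edge misses `a` or `b`, so its contribution to the cut does not see one of them. -/
lemma cutW_isModularPair [Fintype V] (G : SimpleGraph V) (w : Sym2 V → ℝ) {a b : V}
    (hab : a ≠ b) (hadj : ¬ G.Adj a b) : IsModularPair (cutW G w) a b := by
  unfold cutW
  refine IsModularPair.sum fun e he => ?_
  have hmiss : a ∉ e ∨ b ∉ e := by
    by_contra! hboth
    rw [Sym2.mem_and_mem_iff hab] at hboth
    rw [hboth, SimpleGraph.mem_edgeFinset, SimpleGraph.mem_edgeSet] at he
    exact hadj he
  rcases hmiss with ha | hb
  · exact isModularPair_of_insert_left b fun T => by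
      congr 1
      exact propext (crosses_insert_iff_of_notMem ha T)
  · exact isModularPair_of_insert_right a fun T => by
      congr 1
      exact propext (crosses_insert_iff_of_notMem hb T)

end Cut

lemma moebius_eq_zero_of_not_isClique {V : Type*} [Fintype V] [DecidableEq V]
    {G : SimpleGraph V} {w : Sym2 V → ℝ} {φ₁ φ₂ : Finset V → ℝ}
    (h1sub : ∀ X Y, φ₁ (X ∩ Y) + φ₁ (X ∪ Y) ≤ φ₁ X + φ₁ Y)
    (h2sub : ∀ X Y, φ₂ (X ∩ Y) + φ₂ (X ∪ Y) ≤ φ₂ X + φ₂ Y)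
    (hsum : cutW G w = φ₁ + φ₂) {K : Finset V} (hK : ¬ G.IsClique (K : Set V)) :
    moebius φ₁ K = 0 := by
  obtain ⟨a, ha, b, hb, hab, hadj⟩ : ∃ a ∈ K, ∃ b ∈ K, a ≠ b ∧ ¬ G.Adj a b := by
    simpa [SimpleGraph.isClique_iff, Set.Pairwise] using hK
  have hcut : IsModularPair (φ₁ + φ₂) a b := hsum ▸ cutW_isModularPair G w hab hadj
  exact (hcut.of_add_left h1sub h2sub hab).moebius_eq_zero hab ha hb

open Classical in
theorem stmt17_general {V : Type*} [Fintype V] [DecidableEq V] (G : SimpleGraph V)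
    (w : Sym2 V → ℝ) (φ₁ φ₂ : Finset V → ℝ)
    (h0₁ : φ₁ ∅ = 0)
    (h1sub : ∀ X Y : Finset V, φ₁ (X ∩ Y) + φ₁ (X ∪ Y) ≤ φ₁ X + φ₁ Y)
    (h2sub : ∀ X Y : Finset V, φ₂ (X ∩ Y) + φ₂ (X ∪ Y) ≤ φ₂ X + φ₂ Y)
    (hsum : ∀ X : Finset V, cutW G w X = φ₁ X + φ₂ X) :
    ∃ w' : Finset V → ℝ, ∀ X : Finset V,
      φ₁ X = ∑ K ∈ X.powerset.filter
          (fun K : Finset V => K.Nonempty ∧ G.IsClique (K : Set V)), w' K := by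
  refine ⟨moebius φ₁, fun X => ?_⟩
  rw [sum_filter_of_ne, sum_powerset_moebius]
  intro K _ hK
  rcases K.eq_empty_or_nonempty with rfl | hne
  · simp [moebius, h0₁] at hK
  · exact ⟨hne, by_contra fun hcl =>
      hK (moebius_eq_zero_of_not_isClique h1sub h2sub (funext hsum) hcl)⟩

open Classical in
/-- In any monotonic sum-decomposition `d_w = φ₁ + φ₂`, the increasing part `φ₁`
is a weighted sum, over nonempty cliques contained in `X`, of clique weights. -/
theorem stmt17 {V : Type*} [Fintype V] [DecidableEq V] (G : SimpleGraph V)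
    (w : Sym2 V → ℝ) (hw : ∀ e, 0 ≤ w e) (φ₁ φ₂ : Finset V → ℝ)
    (h0₁ : φ₁ ∅ = 0) (h0₂ : φ₂ ∅ = 0)
    (h1inc : ∀ X Y : Finset V, X ⊆ Y → φ₁ X ≤ φ₁ Y)
    (h1sub : ∀ X Y : Finset V, φ₁ (X ∩ Y) + φ₁ (X ∪ Y) ≤ φ₁ X + φ₁ Y)
    (h2dec : ∀ X Y : Finset V, X ⊆ Y → φ₂ Y ≤ φ₂ X)
    (h2sub : ∀ X Y : Finset V, φ₂ (X ∩ Y) + φ₂ (X ∪ Y) ≤ φ₂ X + φ₂ Y)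
    (hsum : ∀ X : Finset V, cutW G w X = φ₁ X + φ₂ X) :
    ∃ w' : Finset V → ℝ, ∀ X : Finset V,
      φ₁ X = ∑ K ∈ X.powerset.filter
          (fun K : Finset V => K.Nonempty ∧ G.IsClique (K : Set V)), w' K :=
  stmt17_general G w φ₁ φ₂ h0₁ h1sub h2sub hsum
end

section
/- Let G = (V, E) be a finite simple triangle-free graph and w : E → ℝ_{≥0}. Then for every decomposition d_w = φ_1 + φ_2 with φ_1 increasing submodular and φ_2 decreasing submodular and φ_1(∅)=φ_2(∅)=0, one has φ_1(V) ≥ w(E); moreover equality is attained, so the minimum of φ_1(V) over such decompositions equals w(E). -/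
open Finset

namespace SetFunction

variable {α : Type*} [DecidableEq α]

def marginal (f : Finset α → ℝ) (x : α) (A : Finset α) : ℝ := f (insert x A) - f A

def secondDiff (f : Finset α → ℝ) (u v : α) (A : Finset α) : ℝ :=
  marginal f u (insert v A) - marginal f u A

/-- The third differences of `f` vanish: as a function of the indicator vector, `f` is a
multilinear polynomial of degree at most two. -/
def IsQuadratic (f : Finset α → ℝ) : Prop :=
  ∀ (A : Finset α) (u v x : α), u ≠ v → u ≠ x → v ≠ x →
    secondDiff f u v (insert x A) = secondDiff f u v A

variable {f : Finset α → ℝ}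

lemma secondDiff_comm (f : Finset α → ℝ) (u v : α) (A : Finset α) :
    secondDiff f u v A = secondDiff f v u A := by
  simp only [secondDiff, marginal, insert_comm u v]
  ring

lemma secondDiff_insert_sub_comm (f : Finset α → ℝ) (u v x : α) (A : Finset α) :
    secondDiff f u v (insert x A) - secondDiff f u v A =
      secondDiff f u x (insert v A) - secondDiff f u x A := by
  simp only [secondDiff, marginal]
  rw [insert_comm x v]
  ring

lemma secondDiff_nonpos_of_submodular
    (hf : ∀ X Y : Finset α, f (X ∩ Y) + f (X ∪ Y) ≤ f X + f Y) {u v : α} (huv : u ≠ v)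
    (A : Finset α) : secondDiff f u v A ≤ 0 := by
  have hinter : insert u A ∩ insert v A = A := by
    ext a
    simp only [mem_inter, mem_insert]
    grind
  have hunion : insert u A ∪ insert v A = insert u (insert v A) := by
    rw [insert_union, union_insert, union_self]
  have := hf (insert u A) (insert v A)
  rw [hinter, hunion] at this
  simp only [secondDiff, marginal]
  linarith

namespace IsQuadratic

variable (hf : IsQuadratic f)
include hf

lemma secondDiff_eq_secondDiff_empty {u v : α} (huv : u ≠ v) {A : Finset α} (hu : u ∉ A)
    (hv : v ∉ A) : secondDiff f u v A = secondDiff f u v ∅ := by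
  induction A using Finset.induction_on with
  | empty => rfl
  | insert x A _ ih =>
    rw [mem_insert, not_or] at hu hv
    rw [hf A u v x huv hu.1 hv.1, ih hu.2 hv.2]

lemma marginal_eq {x : α} {S : Finset α} (hx : x ∉ S) :
    marginal f x S = marginal f x ∅ + ∑ z ∈ S, secondDiff f z x ∅ := by
  induction S using Finset.induction_on with
  | empty => simp
  | insert y S hy ih =>
    rw [mem_insert, not_or] at hx
    rw [sum_insert hy, secondDiff_comm, ← hf.secondDiff_eq_secondDiff_empty hx.1 hx.2 hy]
    have hstep : secondDiff f x y S = marginal f x (insert y S) - marginal f x S := rfl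
    linarith [ih hx.2]

lemma two_mul_sub_eq_sum (S : Finset α) :
    2 * (f S - f ∅) = ∑ z ∈ S, (marginal f z (S.erase z) + marginal f z ∅) := by
  induction S using Finset.induction_on with
  | empty => simp
  | insert x S hx ih =>
    have step : ∀ z ∈ S, marginal f z ((insert x S).erase z) + marginal f z ∅ =
        (marginal f z (S.erase z) + marginal f z ∅) + secondDiff f z x ∅ := by
      intro z hz
      have hzx : z ≠ x := ne_of_mem_of_not_mem hz hx
      rw [erase_insert_of_ne hzx.symm, ← hf.secondDiff_eq_secondDiff_empty hzx
        (notMem_erase z S) (fun h => hx (mem_of_mem_erase h))]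
      simp only [secondDiff]
      ring
    rw [sum_insert hx, erase_insert hx, sum_congr rfl step, sum_add_distrib, ← ih]
    linarith [hf.marginal_eq hx, show marginal f x S = f (insert x S) - f S from rfl]

end IsQuadratic

end SetFunction

lemma ite_add_ite_le_ite_add_ite {p q r s : Prop} {_ : Decidable p} {_ : Decidable q}
    {_ : Decidable r} {_ : Decidable s} {c : ℝ} (hc : 0 ≤ c) (hand : r ∧ s → p ∧ q) (hor : r ∨ s → p ∨ q) :
    ((if r then c else 0) + if s then c else 0) ≤ (if p then c else 0) + if q then c else 0 := by
  split_ifs <;> first | linarith | (exfalso; tauto)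

open SetFunction

section Graph

variable {V : Type*} {G : SimpleGraph V}

lemma isQuadratic_of_cliqueFree [DecidableEq V] (hG : G.CliqueFree 3) {f : Finset V → ℝ}
    (hf : ∀ A u v, u ≠ v → ¬ G.Adj u v → secondDiff f u v A = 0) : IsQuadratic f := by
  intro A u v x huv hux hvx
  rw [← sub_eq_zero]
  by_cases hadj_uv : G.Adj u v
  swap
  · rw [hf _ _ _ huv hadj_uv, hf _ _ _ huv hadj_uv, sub_self]
  by_cases hadj_ux : G.Adj u x
  swap
  · rw [secondDiff_insert_sub_comm, hf _ _ _ hux hadj_ux, hf _ _ _ hux hadj_ux, sub_self]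
  by_cases hadj_vx : G.Adj v x
  · exact (hG {u, v, x} (SimpleGraph.is3Clique_triple_iff.mpr ⟨hadj_uv, hadj_ux, hadj_vx⟩)).elim
  · rw [secondDiff_comm f u v, secondDiff_comm f u v, secondDiff_insert_sub_comm,
      hf _ _ _ hvx hadj_vx, hf _ _ _ hvx hadj_vx, sub_self]

variable [Fintype V] (G) (w : Sym2 V → ℝ)

lemma secondDiff_cutW_eq_zero [DecidableEq V] {u v : V} (huv : u ≠ v) (hadj : ¬ G.Adj u v)
    (A : Finset V) :
    secondDiff (cutW G w) u v A = 0 := by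
  simp only [secondDiff, marginal, cutW, ← sum_sub_distrib]
  refine sum_eq_zero fun e he => ?_
  induction e using Sym2.ind with
  | _ a b =>
    have hab : G.Adj a b := by simpa using he
    have h1 : ¬(a = u ∧ b = v) := by rintro ⟨rfl, rfl⟩; exact hadj hab
    have h2 : ¬(a = v ∧ b = u) := by rintro ⟨rfl, rfl⟩; exact hadj hab.symm
    have hne : a ≠ b := hab.ne
    simp only [Sym2.mem_iff, mem_insert]
    by_cases hau : a = u <;> by_cases hbu : b = u <;> by_cases hav : a = v <;>
      by_cases hbv : b = v <;> by_cases haA : a ∈ A <;> by_cases hbA : b ∈ A <;>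
      simp_all

open Classical in
lemma sum_cutW_singleton : ∑ z, cutW G w {z} = 2 * ∑ e ∈ G.edgeFinset, w e := by
  simp only [cutW]
  rw [sum_comm, mul_sum]
  refine sum_congr rfl fun e he => ?_
  have hdiag := G.not_isDiag_of_mem_edgeSet (SimpleGraph.mem_edgeFinset.mp he)
  have hcross : ∀ z, ((∃ u ∈ e, u ∈ ({z} : Finset V)) ∧ ∃ u ∈ e, u ∉ ({z} : Finset V)) ↔
      z ∈ e.toFinset := by
    induction e using Sym2.ind with
    | _ a b =>
      intro z
      rw [Sym2.mk_isDiag_iff] at hdiag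
      simp only [Sym2.mem_toFinset, Sym2.mem_iff, mem_singleton]
      by_cases hza : z = a <;> by_cases hzb : z = b <;> simp_all [eq_comm]
  simp only [hcross]
  rw [sum_ite_mem, univ_inter, sum_const, Sym2.card_toFinset_of_not_isDiag _ hdiag,
    nsmul_eq_mul, Nat.cast_ofNat]

open Classical in
/-- `e_w(X)`: the weight of the edges meeting `X`. -/
noncomputable def incidentWeight (X : Finset V) : ℝ :=
  ∑ e ∈ G.edgeFinset, if ∃ u ∈ e, u ∈ X then w e else 0

open Classical in
/-- `i_w(X)`: the weight of the edges inside `X`. -/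
noncomputable def internalWeight (X : Finset V) : ℝ :=
  ∑ e ∈ G.edgeFinset, if ∀ u ∈ e, u ∈ X then w e else 0

lemma cutW_eq_incidentWeight_sub_internalWeight (X : Finset V) :
    cutW G w X = incidentWeight G w X - internalWeight G w X := by
  simp only [cutW, incidentWeight, internalWeight, ← sum_sub_distrib]
  refine sum_congr rfl fun e _ => ?_
  by_cases hinside : ∀ u ∈ e, u ∈ X
  · have hmeets : ∃ u ∈ e, u ∈ X := ⟨_, e.out_fst_mem, hinside _ e.out_fst_mem⟩
    rw [if_pos hinside, if_pos hmeets, sub_self, if_neg]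
    rintro ⟨-, u, hu, huX⟩
    exact huX (hinside u hu)
  · rw [if_neg hinside, sub_zero]
    push Not at hinside
    classical
    exact if_congr (and_iff_left hinside) rfl rfl

@[simp] lemma incidentWeight_empty : incidentWeight G w ∅ = 0 := by
  simp [incidentWeight]

@[simp] lemma internalWeight_empty : internalWeight G w ∅ = 0 := by
  refine sum_eq_zero fun e _ => if_neg fun h => notMem_empty _ (h _ e.out_fst_mem)

open Classical in
lemma incidentWeight_univ : incidentWeight G w univ = ∑ e ∈ G.edgeFinset, w e :=
  sum_congr rfl fun e _ => if_pos ⟨_, e.out_fst_mem, mem_univ _⟩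

variable {w} (hw : ∀ e, 0 ≤ w e)
include hw

lemma incidentWeight_mono {X Y : Finset V} (hXY : X ⊆ Y) :
    incidentWeight G w X ≤ incidentWeight G w Y := by
  refine sum_le_sum fun e _ => ?_
  split_ifs with hX hY
  · exact le_rfl
  · exact (hY (hX.imp fun u hu => ⟨hu.1, hXY hu.2⟩)).elim
  · exact hw e
  · exact le_rfl

lemma internalWeight_mono {X Y : Finset V} (hXY : X ⊆ Y) :
    internalWeight G w X ≤ internalWeight G w Y := by
  refine sum_le_sum fun e _ => ?_
  split_ifs with hX hY
  · exact le_rfl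
  · exact (hY fun u hu => hXY (hX u hu)).elim
  · exact hw e
  · exact le_rfl

lemma incidentWeight_submodular [DecidableEq V] (X Y : Finset V) :
    incidentWeight G w (X ∩ Y) + incidentWeight G w (X ∪ Y) ≤
      incidentWeight G w X + incidentWeight G w Y := by
  simp only [incidentWeight, ← sum_add_distrib]
  refine sum_le_sum fun e _ => ite_add_ite_le_ite_add_ite (hw e) ?_ ?_
  · rintro ⟨⟨u, hu, huXY⟩, -⟩
    exact ⟨⟨u, hu, (mem_inter.1 huXY).1⟩, ⟨u, hu, (mem_inter.1 huXY).2⟩⟩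
  · rintro (⟨u, hu, huXY⟩ | ⟨u, hu, huXY⟩)
    · exact Or.inl ⟨u, hu, (mem_inter.1 huXY).1⟩
    · rcases mem_union.1 huXY with h | h
      exacts [Or.inl ⟨u, hu, h⟩, Or.inr ⟨u, hu, h⟩]

lemma internalWeight_supermodular [DecidableEq V] (X Y : Finset V) :
    internalWeight G w X + internalWeight G w Y ≤
      internalWeight G w (X ∩ Y) + internalWeight G w (X ∪ Y) := by
  simp only [internalWeight, ← sum_add_distrib]
  refine sum_le_sum fun e _ => ite_add_ite_le_ite_add_ite (hw e) ?_ ?_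
  · rintro ⟨hX, hY⟩
    exact ⟨fun u hu => mem_inter.2 ⟨hX u hu, hY u hu⟩, fun u hu => mem_union_left _ (hX u hu)⟩
  · rintro (h | h)
    exacts [Or.inr fun u hu => mem_union_left _ (h u hu),
      Or.inr fun u hu => mem_union_right _ (h u hu)]

end Graph

open Classical in
theorem sum_edgeWeight_le_of_cutW_eq_add {V : Type*} [Fintype V] [DecidableEq V]
    {G : SimpleGraph V} (hG : G.CliqueFree 3) {w : Sym2 V → ℝ} {φ₁ φ₂ : Finset V → ℝ}
    (hφ₁ : φ₁ ∅ = 0) (hφ₂ : φ₂ ∅ = 0)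
    (mono₁ : ∀ X Y : Finset V, X ⊆ Y → φ₁ X ≤ φ₁ Y)
    (sub₁ : ∀ X Y : Finset V, φ₁ (X ∩ Y) + φ₁ (X ∪ Y) ≤ φ₁ X + φ₁ Y)
    (anti₂ : ∀ X Y : Finset V, X ⊆ Y → φ₂ Y ≤ φ₂ X)
    (sub₂ : ∀ X Y : Finset V, φ₂ (X ∩ Y) + φ₂ (X ∪ Y) ≤ φ₂ X + φ₂ Y)
    (hcut : ∀ X : Finset V, cutW G w X = φ₁ X + φ₂ X) :
    ∑ e ∈ G.edgeFinset, w e ≤ φ₁ univ := by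
  have hmodular : ∀ A u v, u ≠ v → ¬ G.Adj u v → secondDiff φ₁ u v A = 0 := by
    intro A u v huv hadj
    have hsplit : secondDiff (cutW G w) u v A = secondDiff φ₁ u v A + secondDiff φ₂ u v A := by
      simp only [secondDiff, marginal, hcut]
      ring
    linarith [secondDiff_nonpos_of_submodular sub₁ huv A,
      secondDiff_nonpos_of_submodular sub₂ huv A, secondDiff_cutW_eq_zero G w huv hadj A]
  have hidentity := (isQuadratic_of_cliqueFree hG hmodular).two_mul_sub_eq_sum univ
  have htop : ∀ z, 0 ≤ marginal φ₁ z (univ.erase z) :=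
    fun z => sub_nonneg.2 (mono₁ _ _ (subset_insert _ _))
  have hbottom : ∀ z, cutW G w {z} ≤ marginal φ₁ z ∅ := by
    intro z
    rw [marginal, insert_empty, hφ₁]
    linarith [hcut {z}, anti₂ ∅ {z} (empty_subset _)]
  have hsum := sum_le_sum fun z (_ : z ∈ univ) => add_le_add (htop z) (hbottom z)
  rw [sum_add_distrib, sum_const_zero, zero_add, sum_cutW_singleton] at hsum
  linarith

open Classical in
/-- For a triangle-free graph, the minimum of `φ₁(V)` over monotonic
sum-decompositions `d_w = φ₁ + φ₂` equals the total edge weight `w(E)`. -/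
theorem stmt18 {V : Type*} [Fintype V] [DecidableEq V] (G : SimpleGraph V)
    (hG : G.CliqueFree 3) (w : Sym2 V → ℝ) (hw : ∀ e, 0 ≤ w e) :
    IsLeast {r : ℝ | ∃ φ₁ φ₂ : Finset V → ℝ, φ₁ ∅ = 0 ∧ φ₂ ∅ = 0 ∧
        (∀ X Y : Finset V, X ⊆ Y → φ₁ X ≤ φ₁ Y) ∧
        (∀ X Y : Finset V, φ₁ (X ∩ Y) + φ₁ (X ∪ Y) ≤ φ₁ X + φ₁ Y) ∧
        (∀ X Y : Finset V, X ⊆ Y → φ₂ Y ≤ φ₂ X) ∧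
        (∀ X Y : Finset V, φ₂ (X ∩ Y) + φ₂ (X ∪ Y) ≤ φ₂ X + φ₂ Y) ∧
        (∀ X : Finset V, cutW G w X = φ₁ X + φ₂ X) ∧ r = φ₁ Finset.univ}
      (∑ e ∈ G.edgeFinset, w e) := by
  refine ⟨⟨incidentWeight G w, fun X => -internalWeight G w X, incidentWeight_empty G w,
    by simp, fun X Y => incidentWeight_mono G hw, incidentWeight_submodular G hw,
    fun X Y hXY => neg_le_neg (internalWeight_mono G hw hXY), fun X Y => ?_,
    fun X => ?_, (incidentWeight_univ G w).symm⟩, ?_⟩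
  · linarith [internalWeight_supermodular G hw X Y]
  · rw [cutW_eq_incidentWeight_sub_internalWeight, sub_eq_add_neg]
  · rintro r ⟨φ₁, φ₂, hφ₁, hφ₂, mono₁, sub₁, anti₂, sub₂, hcut, rfl⟩
    exact sum_edgeWeight_le_of_cutW_eq_add hG hφ₁ hφ₂ mono₁ sub₁ anti₂ sub₂ hcut
end

section
/- The unweighted cut function d of the complete graph K_n admits a decomposition d = φ_1 + φ_2 into an increasing submodular function φ_1 and a decreasing submodular function φ_2, both vanishing on ∅, such that max(‖φ_1‖, ‖φ_2‖) ≤ max_X d(X) = ⌈n/2⌉·⌊n/2⌋; concretely, with h(k) = k(n−k), one can take φ_1(X) = h(min(|X|, ⌊n/2⌋)) and φ_2(X) = h(max(|X|, ⌊n/2⌋)) − h(⌊n/2⌋). -/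
/-- The cut function of the complete graph `K_n` admits a `1`-bounded monotonic
sum-decomposition: with `h(k) = k(n−k)`, take `φ₁(X) = h(min(|X|, ⌊n/2⌋))` and
`φ₂(X) = h(max(|X|, ⌊n/2⌋)) − h(⌊n/2⌋)`. -/
theorem stmt19 {V : Type*} [Fintype V] [DecidableEq V] (n : ℕ)
    (hn : Fintype.card V = n) (d φ₁ φ₂ : Finset V → ℝ) (h : ℕ → ℝ)
    (hh : ∀ k : ℕ, h k = (k : ℝ) * ((n : ℝ) - (k : ℝ)))
    (hd : ∀ X : Finset V, d X = h X.card)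
    (hφ₁ : ∀ X : Finset V, φ₁ X = h (min X.card (n / 2)))
    (hφ₂ : ∀ X : Finset V, φ₂ X = h (max X.card (n / 2)) - h (n / 2)) :
    φ₁ ∅ = 0 ∧ φ₂ ∅ = 0 ∧
    (∀ X Y : Finset V, X ⊆ Y → φ₁ X ≤ φ₁ Y) ∧
    (∀ X Y : Finset V, φ₁ (X ∩ Y) + φ₁ (X ∪ Y) ≤ φ₁ X + φ₁ Y) ∧
    (∀ X Y : Finset V, X ⊆ Y → φ₂ Y ≤ φ₂ X) ∧
    (∀ X Y : Finset V, φ₂ (X ∩ Y) + φ₂ (X ∪ Y) ≤ φ₂ X + φ₂ Y) ∧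
    (∀ X : Finset V, d X = φ₁ X + φ₂ X) ∧
    (∀ X : Finset V, |φ₁ X| ≤ (((n + 1) / 2 : ℕ) : ℝ) * ((n / 2 : ℕ) : ℝ)) ∧
    (∀ X : Finset V, |φ₂ X| ≤ (((n + 1) / 2 : ℕ) : ℝ) * ((n / 2 : ℕ) : ℝ)) ∧
    IsGreatest (Set.range d) ((((n + 1) / 2 : ℕ) : ℝ) * ((n / 2 : ℕ) : ℝ)) := by
  set m := n / 2 with hm
  -- h is increasing up to m
  have hmono : ∀ a b : ℕ, a ≤ b → b ≤ m → h a ≤ h b := by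
    intro a b hab hb
    rw [hh, hh]
    have h1 : (a : ℝ) ≤ (b : ℝ) := by exact_mod_cast hab
    have h2 : (a : ℝ) + (b : ℝ) ≤ (n : ℝ) := by
      have : a + b ≤ n := by omega
      exact_mod_cast this
    nlinarith [mul_nonneg (sub_nonneg.2 h1) (by linarith : (0:ℝ) ≤ (n:ℝ) - a - b)]
  -- h is decreasing from m on
  have hanti : ∀ a b : ℕ, m ≤ a → a ≤ b → h b ≤ h a := by
    intro a b ha hab
    rcases eq_or_lt_of_le hab with rfl | hlt
    · exact le_rfl
    · rw [hh, hh]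
      have h1 : (a : ℝ) ≤ (b : ℝ) := by exact_mod_cast hab
      have h2 : (n : ℝ) ≤ (a : ℝ) + (b : ℝ) := by
        have : n ≤ a + b := by omega
        exact_mod_cast this
      nlinarith [mul_nonneg (sub_nonneg.2 h1) (by linarith : (0:ℝ) ≤ (a:ℝ) + b - n)]
  -- h is concave
  have hconc : ∀ p q r s : ℕ, p ≤ q → q ≤ r → r ≤ s → p + s = q + r →
      h p + h s ≤ h q + h r := by
    intro p q r s h1 h2 h3 h4
    rw [hh, hh, hh, hh]
    have c1 : (p : ℝ) ≤ (q : ℝ) := by exact_mod_cast h1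
    have c2 : (q : ℝ) ≤ (r : ℝ) := by exact_mod_cast h2
    have c3 : (r : ℝ) ≤ (s : ℝ) := by exact_mod_cast h3
    have c4 : (p : ℝ) + (s : ℝ) = (q : ℝ) + (r : ℝ) := by exact_mod_cast h4
    nlinarith [mul_nonneg (sub_nonneg.2 c1) (by linarith : (0:ℝ) ≤ (r:ℝ) - p)]
  -- concavity of k ↦ h (min k m)
  have g1conc : ∀ p q r s : ℕ, p ≤ q → q ≤ r → r ≤ s → p + s = q + r →
      h (min p m) + h (min s m) ≤ h (min q m) + h (min r m) := by
    intro p q r s h1 h2 h3 h4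
    by_cases hs : s ≤ m
    · have e1 : min p m = p := by omega
      have e2 : min q m = q := by omega
      have e3 : min r m = r := by omega
      have e4 : min s m = s := by omega
      rw [e1, e2, e3, e4]; exact hconc p q r s h1 h2 h3 h4
    · push_neg at hs
      by_cases hp : m ≤ p
      · have e1 : min p m = m := by omega
        have e2 : min q m = m := by omega
        have e3 : min r m = m := by omega
        have e4 : min s m = m := by omega
        rw [e1, e2, e3, e4]
      · push_neg at hp
        have e1 : min p m = p := by omega
        have e4 : min s m = m := by omega
        rw [e1, e4]
        by_cases hr : r ≤ m
        · have e2 : min q m = q := by omega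
          have e3 : min r m = r := by omega
          rw [e2, e3]
          have key : h (q + r - m) + h m ≤ h q + h r :=
            hconc (q + r - m) q r m (by omega) h2 hr (by omega)
          have hpm : h p ≤ h (q + r - m) := hmono p (q + r - m) (by omega) (by omega)
          linarith
        · push_neg at hr
          have e3 : min r m = m := by omega
          rw [e3]
          by_cases hq : q ≤ m
          · have e2 : min q m = q := by omega
            rw [e2]
            have := hmono p q h1 hq
            linarith
          · push_neg at hq
            have e2 : min q m = m := by omega
            rw [e2]
            have := hmono p m (by omega) le_rfl
            linarith
  -- concavity of k ↦ h (max k m)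
  have g2conc : ∀ p q r s : ℕ, p ≤ q → q ≤ r → r ≤ s → p + s = q + r →
      h (max p m) + h (max s m) ≤ h (max q m) + h (max r m) := by
    intro p q r s h1 h2 h3 h4
    by_cases hp : m ≤ p
    · have e1 : max p m = p := by omega
      have e2 : max q m = q := by omega
      have e3 : max r m = r := by omega
      have e4 : max s m = s := by omega
      rw [e1, e2, e3, e4]; exact hconc p q r s h1 h2 h3 h4
    · push_neg at hp
      by_cases hs : s ≤ m
      · have e1 : max p m = m := by omega
        have e2 : max q m = m := by omega
        have e3 : max r m = m := by omega
        have e4 : max s m = m := by omega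
        rw [e1, e2, e3, e4]
      · push_neg at hs
        have e1 : max p m = m := by omega
        have e4 : max s m = s := by omega
        rw [e1, e4]
        by_cases hq : m ≤ q
        · have e2 : max q m = q := by omega
          have e3 : max r m = r := by omega
          rw [e2, e3]
          have key : h m + h (q + r - m) ≤ h q + h r :=
            hconc m q r (q + r - m) hq h2 (by omega) (by omega)
          have hsm : h s ≤ h (q + r - m) := hanti (q + r - m) s (by omega) (by omega)
          linarith
        · push_neg at hq
          have e2 : max q m = m := by omega
          rw [e2]
          by_cases hr : m ≤ r
          · have e3 : max r m = r := by omega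
            rw [e3]
            have := hanti r s hr h3
            linarith
          · push_neg at hr
            have e3 : max r m = m := by omega
            rw [e3]
            have := hanti m s le_rfl (by omega)
            linarith
  have cardle : ∀ X : Finset V, X.card ≤ n := by
    intro X; rw [← hn]; exact Finset.card_le_univ X
  have hT : (((n + 1) / 2 : ℕ) : ℝ) * ((m : ℕ) : ℝ) = h m := by
    rw [hh]
    have e : (n + 1) / 2 = n - m := by omega
    rw [e, Nat.cast_sub (by omega : m ≤ n)]
    ring
  have h0 : h 0 = 0 := by rw [hh]; simp
  have hn0 : h n = 0 := by rw [hh]; simp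
  refine ⟨?_, ?_, ?_, ?_, ?_, ?_, ?_, ?_, ?_, ?_⟩
  · rw [hφ₁, show min (Finset.card (∅ : Finset V)) m = 0 by simp, h0]
  · rw [hφ₂]; simp
  · intro X Y hXY
    rw [hφ₁, hφ₁]
    exact hmono _ _ (by have := Finset.card_le_card hXY; omega) (min_le_right _ _)
  · intro X Y
    rw [hφ₁, hφ₁, hφ₁, hφ₁]
    have key : (X ∩ Y).card + (X ∪ Y).card = X.card + Y.card :=
      Finset.card_inter_add_card_union X Y
    have hiX : (X ∩ Y).card ≤ X.card := Finset.card_le_card Finset.inter_subset_left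
    have hiY : (X ∩ Y).card ≤ Y.card := Finset.card_le_card Finset.inter_subset_right
    rcases le_total X.card Y.card with hc | hc
    · have := g1conc (X ∩ Y).card X.card Y.card (X ∪ Y).card hiX hc (by omega) (by omega)
      linarith
    · have := g1conc (X ∩ Y).card Y.card X.card (X ∪ Y).card hiY hc (by omega) (by omega)
      linarith
  · intro X Y hXY
    rw [hφ₂, hφ₂]
    have := hanti (max X.card m) (max Y.card m) (le_max_right _ _)
      (by have := Finset.card_le_card hXY; omega)
    linarith
  · intro X Y
    rw [hφ₂, hφ₂, hφ₂, hφ₂]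
    have key : (X ∩ Y).card + (X ∪ Y).card = X.card + Y.card :=
      Finset.card_inter_add_card_union X Y
    have hiX : (X ∩ Y).card ≤ X.card := Finset.card_le_card Finset.inter_subset_left
    have hiY : (X ∩ Y).card ≤ Y.card := Finset.card_le_card Finset.inter_subset_right
    rcases le_total X.card Y.card with hc | hc
    · have := g2conc (X ∩ Y).card X.card Y.card (X ∪ Y).card hiX hc (by omega) (by omega)
      linarith
    · have := g2conc (X ∩ Y).card Y.card X.card (X ∪ Y).card hiY hc (by omega) (by omega)
      linarith
  · intro X
    rw [hd, hφ₁, hφ₂]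
    rcases le_total X.card m with hc | hc
    · have e1 : min X.card m = X.card := by omega
      have e2 : max X.card m = m := by omega
      rw [e1, e2]; ring
    · have e1 : min X.card m = m := by omega
      have e2 : max X.card m = X.card := by omega
      rw [e1, e2]; ring
  · intro X
    rw [hφ₁, hT]
    have lb : h 0 ≤ h (min X.card m) := hmono 0 _ (Nat.zero_le _) (min_le_right _ _)
    have ub : h (min X.card m) ≤ h m := hmono _ m (min_le_right _ _) le_rfl
    rw [abs_le]; constructor <;> linarith
  · intro X
    rw [hφ₂, hT]
    have ub : h (max X.card m) ≤ h m := hanti m _ le_rfl (le_max_right _ _)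
    have lb : h n ≤ h (max X.card m) := hanti (max X.card m) n (le_max_right _ _)
      (by have := cardle X; omega)
    rw [abs_le]; constructor <;> linarith
  · constructor
    · obtain ⟨X₀, -, hX₀⟩ := Finset.exists_subset_card_eq
        (show m ≤ (Finset.univ : Finset V).card by rw [Finset.card_univ, hn]; omega)
      exact ⟨X₀, by rw [hd, hX₀, ← hT]⟩
    · rintro y ⟨X, rfl⟩
      rw [hd, hT]
      rcases le_total X.card m with hc | hc
      · exact hmono _ m hc le_rfl
      · exact hanti m _ le_rfl hc
end
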